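/- arXiv:1705.05547 — 9 statements merged into one kernel-verified Lean document; each statement's English description precedes it below -/
import Mathlib

section
/- If p > 1 and f : (0,∞) → [0,∞) is p-integrable, then ∫₀^∞ ( (1/x) ∫₀^x f(t) dt )^p dx ≤ (p/(p-1))^p ∫₀^∞ f(x)^p dx. -/
/-!
Hölder's inequality with the weight `t ^ (1/p)` gives, for every `x > 0`,
`(∫₀ˣ f) ^ p ≤ (p/(p-1)) ^ (p-1) · x ^ ((p-1)²/p) · ∫₀ˣ f(t) ^ p · t ^ (1 - 1/p) dt`.
Dividing by `x ^ p`, integrating over `x > 0` and exchanging the order of integration, the inner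
integral `∫ₜ^∞ x ^ (1/p - 2) dx = (p/(p-1)) · t ^ (1/p - 1)` cancels the weight exactly.
The argument runs for `ℝ≥0∞`-valued integrands, where no integrability is needed, and is transferred
to the Bochner integral at the end.
-/

open MeasureTheory Set
open scoped ENNReal

section

variable {α : Type*} [MeasurableSpace α] {μ : Measure α}

theorem lintegral_rpow_le_lintegral_mul_weight {p : ℝ} (hp : 1 < p) {g ω : α → ℝ≥0∞}
    (hg : AEMeasurable g μ) (hω : AEMeasurable ω μ) (hω_ne_zero : ∀ᵐ a ∂μ, ω a ≠ 0)
    (hω_ne_top : ∀ᵐ a ∂μ, ω a ≠ ∞) :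
    (∫⁻ a, g a ∂μ) ^ p ≤ (∫⁻ a, g a ^ p * ω a ^ (p - 1) ∂μ) * (∫⁻ a, (ω a)⁻¹ ∂μ) ^ (p - 1) := by
  set q := p / (p - 1)
  have hpq : p.HolderConjugate q := .conjExponent hp
  have hp0 : 0 < p := hpq.pos
  have hq0 : 0 < q := hpq.symm.pos
  have hpq_div : p / q = p - 1 := by simp only [q]; field_simp
  have hsplit : ∀ᵐ a ∂μ, g a = g a * ω a ^ q⁻¹ * ω a ^ (-q⁻¹) := by
    filter_upwards [hω_ne_zero, hω_ne_top] with a h0 htop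
    rw [mul_assoc, ← ENNReal.rpow_add _ _ h0 htop, add_neg_cancel, ENNReal.rpow_zero, mul_one]
  have holder := ENNReal.lintegral_mul_le_Lp_mul_Lq μ hpq
    (f := fun a => g a * ω a ^ q⁻¹) (g := fun a => ω a ^ (-q⁻¹))
    (hg.mul (hω.pow_const _)) (hω.pow_const _)
  calc (∫⁻ a, g a ∂μ) ^ p
      ≤ ((∫⁻ a, (g a * ω a ^ q⁻¹) ^ p ∂μ) ^ (1 / p) *
          (∫⁻ a, (ω a ^ (-q⁻¹)) ^ q ∂μ) ^ (1 / q)) ^ p :=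
        ENNReal.rpow_le_rpow ((lintegral_congr_ae hsplit).trans_le holder) hp0.le
    _ = (∫⁻ a, g a ^ p * ω a ^ (p - 1) ∂μ) * (∫⁻ a, (ω a)⁻¹ ∂μ) ^ (p - 1) := by
        rw [ENNReal.mul_rpow_of_nonneg _ _ hp0.le, ← ENNReal.rpow_mul, ← ENNReal.rpow_mul,
          one_div_mul_cancel hp0.ne', ENNReal.rpow_one, one_div, ← div_eq_inv_mul, hpq_div]
        congr 2
        · funext a
          rw [ENNReal.mul_rpow_of_nonneg _ _ hp0.le, ← ENNReal.rpow_mul, inv_mul_eq_div, hpq_div]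
        · refine lintegral_congr fun a => ?_
          rw [← ENNReal.rpow_mul, neg_mul, inv_mul_cancel₀ hq0.ne', ENNReal.rpow_neg_one]

theorem integral_le_toReal_lintegral_ofReal (f : α → ℝ) :
    ∫ a, f a ∂μ ≤ (∫⁻ a, ENNReal.ofReal (f a) ∂μ).toReal := by
  by_cases hfi : Integrable f μ
  · rw [integral_eq_lintegral_pos_part_sub_lintegral_neg_part hfi]
    exact sub_le_self _ ENNReal.toReal_nonneg
  · rw [integral_undef hfi]
    exact ENNReal.toReal_nonneg

end

theorem lintegral_Ioo_ofReal_rpow {a x : ℝ} (ha : -1 < a) (hx : 0 < x) :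
    ∫⁻ t in Ioo 0 x, ENNReal.ofReal t ^ a =
      ENNReal.ofReal (a + 1)⁻¹ * ENNReal.ofReal x ^ (a + 1) := by
  have ha1 : 0 < a + 1 := by linarith
  have hint : IntegrableOn (fun t : ℝ => t ^ a) (Ioo 0 x) := by
    have h := intervalIntegral.intervalIntegrable_rpow' (a := 0) (b := x) ha
    rw [intervalIntegrable_iff, uIoc_of_le hx.le] at h
    exact h.mono_set Ioo_subset_Ioc_self
  rw [setLIntegral_congr_fun measurableSet_Ioo fun t ht => ENNReal.ofReal_rpow_of_pos ht.1,
    ← ofReal_integral_eq_lintegral_ofReal hint, integral_Ioc_eq_integral_Ioo.symm,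
    ← intervalIntegral.integral_of_le hx.le, integral_rpow (Or.inl ha),
    Real.zero_rpow ha1.ne', sub_zero, div_eq_inv_mul, ENNReal.ofReal_mul (inv_nonneg.2 ha1.le),
    ENNReal.ofReal_rpow_of_pos hx]
  filter_upwards [ae_restrict_mem measurableSet_Ioo] with t ht
  exact Real.rpow_nonneg ht.1.le a

theorem lintegral_Ioi_ofReal_rpow {b t : ℝ} (hb : b < -1) (ht : 0 < t) :
    ∫⁻ x in Ioi t, ENNReal.ofReal x ^ b =
      ENNReal.ofReal (-(b + 1))⁻¹ * ENNReal.ofReal t ^ (b + 1) := by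
  rw [setLIntegral_congr_fun measurableSet_Ioi fun x hx =>
      ENNReal.ofReal_rpow_of_pos (ht.trans hx),
    ← ofReal_integral_eq_lintegral_ofReal (integrableOn_Ioi_rpow_of_lt hb ht),
    integral_Ioi_rpow_of_lt hb ht, neg_div, ← div_neg, div_eq_inv_mul,
    ENNReal.ofReal_mul (inv_nonneg.2 (by linarith)), ENNReal.ofReal_rpow_of_pos ht]
  filter_upwards [ae_restrict_mem measurableSet_Ioi] with x hx
  exact Real.rpow_nonneg (ht.trans hx).le b

theorem lintegral_Ioi_mul_lintegral_Ioo_swap {w h : ℝ → ℝ≥0∞} (hw : Measurable w)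
    (hh : Measurable h) (a : ℝ) :
    ∫⁻ x in Ioi a, w x * ∫⁻ t in Ioo a x, h t = ∫⁻ t in Ioi a, h t * ∫⁻ x in Ioi t, w x := by
  set S : Set (ℝ × ℝ) := {z | a < z.2 ∧ z.2 < z.1}
  have hS : MeasurableSet S :=
    (measurableSet_lt measurable_const measurable_snd).inter
      (measurableSet_lt measurable_snd measurable_fst)
  set K : ℝ → ℝ → ℝ≥0∞ := fun x t => S.indicator (fun z => w z.1 * h z.2) (x, t)
  have hK : Measurable (Function.uncurry K) :=
    ((hw.comp measurable_fst).mul (hh.comp measurable_snd)).indicator hS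
  have hK_fst :
      ∀ x, ∫⁻ t, K x t = (Ioi a).indicator (fun x => w x * ∫⁻ t in Ioo a x, h t) x := by
    intro x
    by_cases hx : x ∈ Ioi a
    · rw [indicator_of_mem hx, ← lintegral_const_mul _ hh,
        ← lintegral_indicator measurableSet_Ioo]
      rfl
    · rw [indicator_of_notMem hx]
      refine lintegral_eq_zero_of_ae_eq_zero (Filter.Eventually.of_forall fun t => ?_)
      exact indicator_of_notMem (fun ht => hx (ht.1.trans ht.2)) _
  have hK_snd : ∀ t, ∫⁻ x, K x t = (Ioi a).indicator (fun t => h t * ∫⁻ x in Ioi t, w x) t := by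
    intro t
    by_cases ht : t ∈ Ioi a
    · rw [indicator_of_mem ht, ← lintegral_const_mul _ hw,
        ← lintegral_indicator measurableSet_Ioi]
      refine lintegral_congr fun x => ?_
      simp only [K, S, indicator_apply, mem_ofPred_eq, mem_Ioi, mem_Ioi.1 ht, true_and, mul_comm]
    · rw [indicator_of_notMem ht]
      refine lintegral_eq_zero_of_ae_eq_zero (Filter.Eventually.of_forall fun x => ?_)
      exact indicator_of_notMem (fun hx => ht hx.1) _
  rw [← lintegral_indicator measurableSet_Ioi, ← lintegral_indicator measurableSet_Ioi]
  simp_rw [← hK_fst, ← hK_snd]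
  exact lintegral_lintegral_swap hK.aemeasurable

theorem inv_mul_lintegral_Ioo_rpow_le {p x : ℝ} (hp : 1 < p) (hx : 0 < x) {g : ℝ → ℝ≥0∞}
    (hg : Measurable g) :
    ((ENNReal.ofReal x)⁻¹ * ∫⁻ t in Ioo 0 x, g t) ^ p ≤
      ENNReal.ofReal (p / (p - 1)) ^ (p - 1) *
        (ENNReal.ofReal x ^ (p⁻¹ - 2) *
          ∫⁻ t in Ioo 0 x, g t ^ p * ENNReal.ofReal t ^ (1 - p⁻¹)) := by
  have hp0 : 0 < p := by linarith
  have hx0 : ENNReal.ofReal x ≠ 0 := (ENNReal.ofReal_pos.2 hx).ne'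
  have holder := lintegral_rpow_le_lintegral_mul_weight hp hg.aemeasurable
    (μ := volume.restrict (Ioo 0 x)) (ω := fun t => ENNReal.ofReal t ^ p⁻¹) (by fun_prop)
    ((ae_restrict_mem measurableSet_Ioo).mono fun t ht =>
      (ENNReal.rpow_pos (ENNReal.ofReal_pos.2 ht.1) ENNReal.ofReal_ne_top).ne')
    (.of_forall fun t => ENNReal.rpow_ne_top_of_nonneg (by positivity) ENNReal.ofReal_ne_top)
  simp only [← ENNReal.rpow_mul, ← ENNReal.rpow_neg] at holder
  rw [lintegral_Ioo_ofReal_rpow (by simp [inv_lt_one_of_one_lt₀ hp]) hx] at holder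
  have hweight : p⁻¹ * (p - 1) = 1 - p⁻¹ := by field_simp
  have hconst : (-p⁻¹ + 1)⁻¹ = p / (p - 1) := by field_simp; ring
  have hpower : ENNReal.ofReal x ^ (-p) * ENNReal.ofReal x ^ ((-p⁻¹ + 1) * (p - 1)) =
      ENNReal.ofReal x ^ (p⁻¹ - 2) := by
    rw [← ENNReal.rpow_add _ _ hx0 ENNReal.ofReal_ne_top]
    congr 1
    field_simp
    ring
  rw [hweight, hconst] at holder
  calc ((ENNReal.ofReal x)⁻¹ * ∫⁻ t in Ioo 0 x, g t) ^ p
      = ENNReal.ofReal x ^ (-p) * (∫⁻ t in Ioo 0 x, g t) ^ p := by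
        rw [ENNReal.mul_rpow_of_nonneg _ _ hp0.le, ENNReal.inv_rpow, ← ENNReal.rpow_neg]
    _ ≤ ENNReal.ofReal x ^ (-p) * ((∫⁻ t in Ioo 0 x, g t ^ p * ENNReal.ofReal t ^ (1 - p⁻¹)) *
          (ENNReal.ofReal (p / (p - 1)) * ENNReal.ofReal x ^ (-p⁻¹ + 1)) ^ (p - 1)) := by
        gcongr
    _ = _ := by
        rw [ENNReal.mul_rpow_of_nonneg _ _ (by linarith), ← ENNReal.rpow_mul, ← hpower]
        ring

theorem lintegral_hardy_inequality {p : ℝ} (hp : 1 < p) {g : ℝ → ℝ≥0∞} (hg : Measurable g) :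
    ∫⁻ x in Ioi 0, ((ENNReal.ofReal x)⁻¹ * ∫⁻ t in Ioo 0 x, g t) ^ p ≤
      ENNReal.ofReal (p / (p - 1)) ^ p * ∫⁻ t in Ioi 0, g t ^ p := by
  set C := ENNReal.ofReal (p / (p - 1))
  have hp0 : 0 < p := by linarith
  have hp1 : 0 < p - 1 := by linarith
  have hconst : (-(p⁻¹ - 2 + 1))⁻¹ = p / (p - 1) := by
    rw [show -(p⁻¹ - 2 + 1) = 1 - p⁻¹ by ring, inv_eq_iff_eq_inv, inv_div, sub_div,
      div_self hp0.ne', one_div]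
  have hCp : C ^ (p - 1) * C = C ^ p := by
    simpa using (ENNReal.rpow_add_of_nonneg (x := C) (p - 1) 1 hp1.le zero_le_one).symm
  have htail : ∀ t ∈ Ioi (0 : ℝ), g t ^ p * ENNReal.ofReal t ^ (1 - p⁻¹) *
      ∫⁻ x in Ioi t, ENNReal.ofReal x ^ (p⁻¹ - 2) = C * g t ^ p := by
    intro t ht
    have hexp : p⁻¹ - 2 < -1 := by linarith [inv_lt_one_of_one_lt₀ hp]
    rw [lintegral_Ioi_ofReal_rpow hexp ht, hconst, mul_left_comm, mul_assoc,
      ← ENNReal.rpow_add _ _ (ENNReal.ofReal_pos.2 ht).ne' ENNReal.ofReal_ne_top,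
      show 1 - p⁻¹ + (p⁻¹ - 2 + 1) = 0 by ring, ENNReal.rpow_zero, mul_one, mul_comm]
  calc ∫⁻ x in Ioi 0, ((ENNReal.ofReal x)⁻¹ * ∫⁻ t in Ioo 0 x, g t) ^ p
      ≤ ∫⁻ x in Ioi 0, C ^ (p - 1) * (ENNReal.ofReal x ^ (p⁻¹ - 2) *
          ∫⁻ t in Ioo 0 x, g t ^ p * ENNReal.ofReal t ^ (1 - p⁻¹)) :=
        setLIntegral_mono' measurableSet_Ioi fun x hx => inv_mul_lintegral_Ioo_rpow_le hp hx hg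
    _ = C ^ (p - 1) * ∫⁻ t in Ioi 0, g t ^ p * ENNReal.ofReal t ^ (1 - p⁻¹) *
          ∫⁻ x in Ioi t, ENNReal.ofReal x ^ (p⁻¹ - 2) := by
        rw [lintegral_const_mul' _ _ (ENNReal.rpow_ne_top_of_nonneg hp1.le ENNReal.ofReal_ne_top),
          lintegral_Ioi_mul_lintegral_Ioo_swap (by fun_prop) (by fun_prop)]
    _ = C ^ p * ∫⁻ t in Ioi 0, g t ^ p := by
        rw [setLIntegral_congr_fun measurableSet_Ioi htail,
          lintegral_const_mul' _ _ ENNReal.ofReal_ne_top, ← mul_assoc, hCp]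

theorem ofReal_rpow_inv_mul_integral_Ioo_le {f : ℝ → ℝ} {p x : ℝ} (hp : 0 ≤ p) (hx : 0 < x)
    (hf : ∀ t ∈ Ioo 0 x, 0 ≤ f t) :
    ENNReal.ofReal (((1/x) * ∫ t in Ioo 0 x, f t) ^ p) ≤
      ((ENNReal.ofReal x)⁻¹ * ∫⁻ t in Ioo 0 x, ENNReal.ofReal (f t)) ^ p := by
  have hx_inv : 0 ≤ 1 / x := by positivity
  rw [← ENNReal.ofReal_rpow_of_nonneg
      (mul_nonneg hx_inv (setIntegral_nonneg measurableSet_Ioo hf)) hp,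
    ENNReal.ofReal_mul hx_inv, one_div, ENNReal.ofReal_inv_of_pos hx]
  gcongr
  exact (ENNReal.ofReal_le_ofReal (integral_le_toReal_lintegral_ofReal _)).trans
    ENNReal.ofReal_toReal_le

theorem hardy_inequality (p : ℝ) (hp : 1 < p) (f : ℝ → ℝ)
    (hf_meas : Measurable f) (hf_nonneg : ∀ x ∈ Ioi (0:ℝ), 0 ≤ f x)
    (hf_int : IntegrableOn (fun x => f x ^ p) (Ioi (0:ℝ))) :
    ∫ x in Ioi (0:ℝ), ((1/x) * ∫ t in Ioo (0:ℝ) x, f t) ^ p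
      ≤ (p/(p-1)) ^ p * ∫ x in Ioi (0:ℝ), f x ^ p := by
  have hp0 : 0 < p := by linarith
  have hC : 0 ≤ p / (p - 1) := div_nonneg hp0.le (by linarith)
  have hf_pow_nonneg : ∀ x ∈ Ioi (0:ℝ), 0 ≤ f x ^ p := fun x hx =>
    Real.rpow_nonneg (hf_nonneg x hx) p
  refine (integral_le_toReal_lintegral_ofReal _).trans (ENNReal.toReal_le_of_le_ofReal
    (mul_nonneg (Real.rpow_nonneg hC p) (setIntegral_nonneg measurableSet_Ioi hf_pow_nonneg)) ?_)
  calc ∫⁻ x in Ioi 0, ENNReal.ofReal (((1/x) * ∫ t in Ioo (0:ℝ) x, f t) ^ p)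
      ≤ ∫⁻ x in Ioi 0, ((ENNReal.ofReal x)⁻¹ * ∫⁻ t in Ioo 0 x, ENNReal.ofReal (f t)) ^ p :=
        setLIntegral_mono' measurableSet_Ioi fun x hx =>
          ofReal_rpow_inv_mul_integral_Ioo_le hp0.le hx fun t ht => hf_nonneg t ht.1
    _ ≤ ENNReal.ofReal (p / (p - 1)) ^ p * ∫⁻ t in Ioi 0, ENNReal.ofReal (f t) ^ p :=
        lintegral_hardy_inequality hp hf_meas.ennreal_ofReal
    _ = ENNReal.ofReal ((p/(p-1)) ^ p * ∫ x in Ioi (0:ℝ), f x ^ p) := by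
        rw [ENNReal.ofReal_mul (Real.rpow_nonneg hC p), ENNReal.ofReal_rpow_of_nonneg hC hp0.le,
          ofReal_integral_eq_lintegral_ofReal hf_int
            (ae_restrict_of_forall_mem measurableSet_Ioi hf_pow_nonneg)]
        congr 1
        exact setLIntegral_congr_fun measurableSet_Ioi fun t ht =>
          ENNReal.ofReal_rpow_of_nonneg (hf_nonneg t ht) hp0.le
end

section
/- The function f(t) = t^p on [0,∞) is superquadratic whenever p ≥ 2; that is, for every a ≥ 0 there exists a constant C_a ∈ ℝ such that b^p ≥ a^p + C_a (b - a) + |b - a|^p for all b ≥ 0 (one may take C_a = p a^{p-1}). -/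
/-! Both sides agree at `b = a`. Differentiating in `d = |b - a|`, the defect
`(a ± d)^p - a^p ∓ p a^(p-1) d - d^p` has derivative `p` times `±(a ± d)^(p-1) ∓ a^(p-1) - d^(p-1)`,
which is nonnegative by superadditivity of `x ↦ x^(p-1)` on `[0, ∞)`, valid because `p - 1 ≥ 1`. -/

open Real Set

theorem le_of_hasDerivAt_of_nonneg_on_Ioo {f f' : ℝ → ℝ} {a b : ℝ} (hab : a ≤ b)
    (hf : ∀ x, HasDerivAt f (f' x) x) (hf' : ∀ x ∈ Ioo a b, 0 ≤ f' x) : f a ≤ f b := by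
  have hmono : MonotoneOn f (Icc a b) :=
    monotoneOn_of_hasDerivWithinAt_nonneg (convex_Icc a b)
      (fun x _ => (hf x).continuousAt.continuousWithinAt) (fun x _ => (hf x).hasDerivWithinAt)
      (by simpa only [interior_Icc] using hf')
  exact hmono (left_mem_Icc.2 hab) (right_mem_Icc.2 hab) hab

section

variable {p a d : ℝ}

theorem rpow_add_tangent_add_rpow_le_rpow_add (hp : 2 ≤ p) (ha : 0 ≤ a) (hd : 0 ≤ d) :
    a ^ p + p * a ^ (p - 1) * d + d ^ p ≤ (a + d) ^ p := by
  have hp1 : 1 ≤ p := by linarith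
  have hderiv : ∀ x, HasDerivAt (fun x => (a + x) ^ p - p * a ^ (p - 1) * x - x ^ p)
      (p * (a + x) ^ (p - 1) - p * a ^ (p - 1) - p * x ^ (p - 1)) x := fun x =>
    ((((hasDerivAt_id' x).const_add a).rpow_const (Or.inr hp1)).sub
      ((hasDerivAt_id' x).const_mul (p * a ^ (p - 1)))).sub (hasDerivAt_rpow_const (Or.inr hp1))
      |>.congr_deriv (by ring)
  have hdefect := le_of_hasDerivAt_of_nonneg_on_Ioo hd hderiv fun x hx => by
    have := add_rpow_le_rpow_add ha hx.1.le (by linarith : 1 ≤ p - 1)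
    nlinarith
  simp only [add_zero, mul_zero, sub_zero, zero_rpow (by linarith : p ≠ 0)] at hdefect
  linarith

theorem rpow_sub_tangent_add_rpow_le_rpow_sub (hp : 2 ≤ p) (hd : 0 ≤ d) (hda : d ≤ a) :
    a ^ p - p * a ^ (p - 1) * d + d ^ p ≤ (a - d) ^ p := by
  have hp1 : 1 ≤ p := by linarith
  have hderiv : ∀ x, HasDerivAt (fun x => (a - x) ^ p + p * a ^ (p - 1) * x - x ^ p)
      (-(p * (a - x) ^ (p - 1)) + p * a ^ (p - 1) - p * x ^ (p - 1)) x := fun x =>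
    ((((hasDerivAt_id' x).const_sub a).rpow_const (Or.inr hp1)).add
      ((hasDerivAt_id' x).const_mul (p * a ^ (p - 1)))).sub (hasDerivAt_rpow_const (Or.inr hp1))
      |>.congr_deriv (by ring)
  have hdefect := le_of_hasDerivAt_of_nonneg_on_Ioo hd hderiv fun x hx => by
    have := add_rpow_le_rpow_add (by linarith [hx.2] : 0 ≤ a - x) hx.1.le (by linarith : 1 ≤ p - 1)
    rw [sub_add_cancel] at this
    nlinarith
  simp only [sub_zero, mul_zero, add_zero, zero_rpow (by linarith : p ≠ 0)] at hdefect
  linarith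

end

theorem rpow_superquadratic (p : ℝ) (hp : 2 ≤ p) :
    ∀ a : ℝ, 0 ≤ a → ∃ C : ℝ, C = p * a ^ (p - 1) ∧
      ∀ b : ℝ, 0 ≤ b → b ^ p ≥ a ^ p + C * (b - a) + |b - a| ^ p := by
  intro a ha
  refine ⟨p * a ^ (p - 1), rfl, fun b hb => ?_⟩
  rcases le_total a b with hab | hba
  · have := rpow_add_tangent_add_rpow_le_rpow_add hp ha (sub_nonneg.2 hab)
    rw [add_sub_cancel] at this
    rw [abs_of_nonneg (sub_nonneg.2 hab)]
    linarith
  · have := rpow_sub_tangent_add_rpow_le_rpow_sub hp (sub_nonneg.2 hba) (sub_le_self a hb)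
    rw [sub_sub_cancel] at this
    rw [abs_of_nonpos (sub_nonpos.2 hba), neg_sub]
    linarith
end

section
/- The function f(t) = -t^p on [0,∞) is superquadratic whenever 1 < p ≤ 2; that is, for every a ≥ 0 there exists C_a ∈ ℝ such that -b^p ≥ -a^p + C_a (b - a) - |b - a|^p for all b ≥ 0. -/
/-!
Take `C = -p a^(p-1)`; the claim becomes `b^p ≤ a^p + p a^(p-1) (b - a) + |b - a|^p`.
The difference of the two sides vanishes at `b = a`, and its derivative in `b` shows that it
grows as `b` moves away from `a` on either side: comparing `b^(p-1)` with `a^(p-1)` and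
`|b - a|^(p-1)` is exactly the subadditivity of `t ↦ t^(p-1)`, valid as `0 ≤ p - 1 ≤ 1`.
-/

open Real Set

namespace Real

variable {p a : ℝ}

lemma hasDerivAt_rpow_sub_tangent (hp : 1 ≤ p) (a x : ℝ) :
    HasDerivAt (fun x => x ^ p - (a ^ p + p * a ^ (p - 1) * (x - a)))
      (p * x ^ (p - 1) - p * a ^ (p - 1)) x := by
  have hline : HasDerivAt (fun x => a ^ p + p * a ^ (p - 1) * (x - a)) (p * a ^ (p - 1)) x := by
    simpa using (((hasDerivAt_id x).sub_const a).const_mul (p * a ^ (p - 1))).const_add (a ^ p)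
  exact (hasDerivAt_rpow_const (Or.inr hp)).sub hline

lemma rpow_le_tangent_add_rpow_sub_of_le (hp1 : 1 ≤ p) (hp2 : p ≤ 2) (ha : 0 ≤ a) {b : ℝ}
    (hab : a ≤ b) : b ^ p ≤ a ^ p + p * a ^ (p - 1) * (b - a) + (b - a) ^ p := by
  set φ : ℝ → ℝ := fun x => (x - a) ^ p - (x ^ p - (a ^ p + p * a ^ (p - 1) * (x - a)))
  have hφ : ∀ x, HasDerivAt φ (p * (x - a) ^ (p - 1) - (p * x ^ (p - 1) - p * a ^ (p - 1))) x :=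
    fun x => by
      have hpow : HasDerivAt (fun x => (x - a) ^ p) (p * (x - a) ^ (p - 1)) x := by
        simpa using ((hasDerivAt_id x).sub_const a).rpow_const (Or.inr hp1)
      exact hpow.sub (hasDerivAt_rpow_sub_tangent hp1 a x)
  have hmono : MonotoneOn φ (Ici a) := by
    refine monotoneOn_of_hasDerivWithinAt_nonneg (convex_Ici a)
      (fun x _ => (hφ x).continuousAt.continuousWithinAt) (fun x _ => (hφ x).hasDerivWithinAt) ?_
    intro x hx
    rw [interior_Ici, mem_Ioi] at hx
    have hsub : x ^ (p - 1) ≤ a ^ (p - 1) + (x - a) ^ (p - 1) := by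
      simpa using rpow_add_le_add_rpow ha (sub_nonneg.2 hx.le) (by linarith) (by linarith)
    linarith [mul_le_mul_of_nonneg_left hsub (by linarith : 0 ≤ p)]
  have hφa : φ a = 0 := by simp [φ, zero_rpow (by linarith : p ≠ 0)]
  have hφb := hmono self_mem_Ici hab hab
  simp only [φ] at hφa hφb
  linarith

lemma rpow_le_tangent_add_rpow_sub_of_ge (hp1 : 1 ≤ p) (hp2 : p ≤ 2) {b : ℝ} (hb : 0 ≤ b)
    (hba : b ≤ a) : b ^ p ≤ a ^ p + p * a ^ (p - 1) * (b - a) + (a - b) ^ p := by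
  set φ : ℝ → ℝ := fun x => (a - x) ^ p - (x ^ p - (a ^ p + p * a ^ (p - 1) * (x - a)))
  have hφ : ∀ x, HasDerivAt φ (-(p * (a - x) ^ (p - 1)) - (p * x ^ (p - 1) - p * a ^ (p - 1))) x :=
    fun x => by
      have hpow : HasDerivAt (fun x => (a - x) ^ p) (-(p * (a - x) ^ (p - 1))) x := by
        simpa using ((hasDerivAt_id x).const_sub a).rpow_const (Or.inr hp1)
      exact hpow.sub (hasDerivAt_rpow_sub_tangent hp1 a x)
  have hanti : AntitoneOn φ (Icc 0 a) := by
    refine antitoneOn_of_hasDerivWithinAt_nonpos (convex_Icc 0 a)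
      (fun x _ => (hφ x).continuousAt.continuousWithinAt) (fun x _ => (hφ x).hasDerivWithinAt) ?_
    intro x hx
    rw [interior_Icc] at hx
    have hsub : a ^ (p - 1) ≤ x ^ (p - 1) + (a - x) ^ (p - 1) := by
      simpa using rpow_add_le_add_rpow hx.1.le (sub_nonneg.2 hx.2.le) (by linarith) (by linarith)
    linarith [mul_le_mul_of_nonneg_left hsub (by linarith : 0 ≤ p)]
  have hφa : φ a = 0 := by simp [φ, zero_rpow (by linarith : p ≠ 0)]
  have hφb := hanti ⟨hb, hba⟩ ⟨hb.trans hba, le_rfl⟩ hba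
  simp only [φ] at hφa hφb
  linarith

lemma rpow_le_tangent_add_abs_sub_rpow (hp1 : 1 ≤ p) (hp2 : p ≤ 2) (ha : 0 ≤ a) {b : ℝ}
    (hb : 0 ≤ b) : b ^ p ≤ a ^ p + p * a ^ (p - 1) * (b - a) + |b - a| ^ p := by
  rcases le_total a b with hab | hba
  · rw [abs_of_nonneg (sub_nonneg.2 hab)]
    exact rpow_le_tangent_add_rpow_sub_of_le hp1 hp2 ha hab
  · rw [abs_sub_comm, abs_of_nonneg (sub_nonneg.2 hba)]
    exact rpow_le_tangent_add_rpow_sub_of_ge hp1 hp2 hb hba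

end Real

theorem neg_rpow_superquadratic (p : ℝ) (hp1 : 1 < p) (hp2 : p ≤ 2) :
    ∀ a : ℝ, 0 ≤ a → ∃ C : ℝ,
      ∀ b : ℝ, 0 ≤ b → -b ^ p ≥ -a ^ p + C * (b - a) - |b - a| ^ p := by
  intro a ha
  refine ⟨-(p * a ^ (p - 1)), fun b hb => ?_⟩
  linarith [rpow_le_tangent_add_abs_sub_rpow hp1.le hp2 ha hb]
end

section
/- Let f : [0,∞) → ℝ be superquadratic, μ a probability measure on a measure space Ω, and φ : Ω → [0,∞) a μ-integrable function (with f∘φ and f(|φ - m|) integrable, where m = ∫ φ dμ). Then f(∫_Ω φ dμ) ≤ ∫_Ω f(φ(t)) dμ(t) - ∫_Ω f(|φ(t) - ∫_Ω φ ds|) dμ(t). -/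
/-!
Let `m = ∫ φ dμ` and let `C` be the slope that superquadraticity provides at `m`. Evaluating the
defining inequality at `b = φ t` and integrating, the affine part `f m + C (φ t - m)` integrates
to `f m` because `φ - m` has mean zero, which leaves exactly the claimed inequality.
-/

open MeasureTheory

namespace MeasureTheory

variable {Ω : Type*} [MeasurableSpace Ω] {μ : Measure Ω} [IsProbabilityMeasure μ]

theorem integral_const_add_mul_sub_integral {φ : Ω → ℝ} (hφ : Integrable φ μ) (c C : ℝ) :
    ∫ t, (c + C * (φ t - ∫ s, φ s ∂μ)) ∂μ = c := by
  have hcentered : Integrable (fun t => C * (φ t - ∫ s, φ s ∂μ)) μ :=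
    (hφ.sub (integrable_const _)).const_mul C
  rw [integral_add (integrable_const c) hcentered, integral_const_mul,
    integral_sub hφ (integrable_const _)]
  simp

theorem const_add_integral_le_of_affine_add_le {φ g r : Ω → ℝ} (hφ : Integrable φ μ)
    (hg : Integrable g μ) (hr : Integrable r μ) {c C : ℝ}
    (h : ∀ t, c + C * (φ t - ∫ s, φ s ∂μ) + r t ≤ g t) :
    c + ∫ t, r t ∂μ ≤ ∫ t, g t ∂μ := by
  have haffine : Integrable (fun t => c + C * (φ t - ∫ s, φ s ∂μ)) μ :=
    (integrable_const c).add ((hφ.sub (integrable_const _)).const_mul C)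
  calc c + ∫ t, r t ∂μ
      = ∫ t, (c + C * (φ t - ∫ s, φ s ∂μ) + r t) ∂μ := by
        rw [integral_add haffine hr, integral_const_add_mul_sub_integral hφ]
    _ ≤ ∫ t, g t ∂μ := integral_mono (haffine.add hr) hg h

end MeasureTheory

theorem jensen_superquadratic {Ω : Type*} [MeasurableSpace Ω]
    (μ : Measure Ω) [IsProbabilityMeasure μ]
    (f : ℝ → ℝ)
    (hf : ∀ a : ℝ, 0 ≤ a → ∃ C : ℝ, ∀ b : ℝ, 0 ≤ b →
      f b ≥ f a + C * (b - a) + f |b - a|)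
    (φ : Ω → ℝ) (hφ_nonneg : ∀ t, 0 ≤ φ t)
    (hφ_int : Integrable φ μ)
    (hfφ_int : Integrable (fun t => f (φ t)) μ)
    (hfd_int : Integrable (fun t => f |φ t - ∫ s, φ s ∂μ|) μ) :
    f (∫ t, φ t ∂μ) ≤ (∫ t, f (φ t) ∂μ) - ∫ t, f |φ t - ∫ s, φ s ∂μ| ∂μ := by
  obtain ⟨C, hC⟩ := hf _ (integral_nonneg hφ_nonneg)
  have := const_add_integral_le_of_affine_add_le hφ_int hfφ_int hfd_int
    fun t => hC (φ t) (hφ_nonneg t)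
  linarith
end

section
/- If f : [0,∞) → ℝ is superquadratic and f ≥ 0, then f is convex on [0,∞). -/
theorem superquadratic_nonneg_convex (f : ℝ → ℝ)
    (hf : ∀ a : ℝ, 0 ≤ a → ∃ C : ℝ, ∀ b : ℝ, 0 ≤ b →
      f b ≥ f a + C * (b - a) + f |b - a|)
    (hf_nonneg : ∀ a : ℝ, 0 ≤ a → 0 ≤ f a) :
    ConvexOn ℝ (Set.Ici (0:ℝ)) f := by
  refine ⟨convex_Ici 0, ?_⟩
  intro x hx y hy s t hs ht hst
  have ha : (0:ℝ) ≤ s • x + t • y := by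
    have := add_nonneg (mul_nonneg hs hx) (mul_nonneg ht hy)
    simpa using this
  obtain ⟨C, hC⟩ := hf _ ha
  have hx' := hC x hx
  have hy' := hC y hy
  have h1 : f x ≥ f (s • x + t • y) + C * (x - (s • x + t • y)) := by
    have := hf_nonneg |x - (s • x + t • y)| (abs_nonneg _)
    linarith
  have h2 : f y ≥ f (s • x + t • y) + C * (y - (s • x + t • y)) := by
    have := hf_nonneg |y - (s • x + t • y)| (abs_nonneg _)
    linarith
  have := add_le_add (mul_le_mul_of_nonneg_left h1 hs)
    (mul_le_mul_of_nonneg_left h2 ht)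
  have ht1 : t = 1 - s := by linarith
  subst ht1
  simp only [smul_eq_mul] at *
  have key : s * (f (s * x + (1 - s) * y) + C * (x - (s * x + (1 - s) * y))) +
      (1 - s) * (f (s * x + (1 - s) * y) + C * (y - (s * x + (1 - s) * y))) =
      f (s * x + (1 - s) * y) := by ring
  linarith
end

section
/- Let p ≥ 2 and let g : (0,∞) → [0,∞) be measurable with ∫₀^∞ g(t)^p dt/t < ∞. Then ∫₀^∞ ( (1/x) ∫₀^x g(t) dt )^p dx/x ≤ ∫₀^∞ g(t)^p dt/t − ∫₀^∞ (1/x) ∫₀^x | g(t) − (1/x) ∫₀^x g(s) ds |^p dt dx/x. -/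
/-!
For `p ≥ 2` and `a, m ≥ 0`, the tangent-line bound for `t ↦ t ^ p` can be sharpened to
`a ^ p ≥ m ^ p + p m ^ (p - 1) (a - m) + |a - m| ^ p`; both cases `a ≥ m` and `a ≤ m` come down to
the superadditivity of `t ↦ t ^ (p - 1)`. Taking `a = g t` and `m` the mean of `g` on `(0, x)`, the
linear term averages out, so `(⨍ g) ^ p + ⨍ |g - ⨍ g| ^ p ≤ ⨍ g ^ p` on every `(0, x)`. Dividing by
`x` and integrating over `x > 0`, Tonelli and `∫_t^∞ dx / x² = 1 / t` turn the right-hand side into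
`∫ g(t) ^ p dt / t`.
-/

open MeasureTheory Set
open scoped ENNReal

namespace Real

lemma rpow_add_tangent_add_rpow_le_rpow_add {p m s : ℝ} (hp : 2 ≤ p) (hm : 0 ≤ m)
    (hs : 0 ≤ s) : m ^ p + p * m ^ (p - 1) * s + s ^ p ≤ (m + s) ^ p := by
  have hp1 : 1 ≤ p := by linarith
  set f : ℝ → ℝ := fun u => (m + u) ^ p - p * m ^ (p - 1) * u - u ^ p
  have hf : ∀ u, HasDerivAt f (p * (m + u) ^ (p - 1) - p * m ^ (p - 1) - p * u ^ (p - 1)) u := by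
    intro u
    have h₁ : HasDerivAt (fun u => (m + u) ^ p) (p * (m + u) ^ (p - 1)) u := by
      simpa using ((hasDerivAt_id u).const_add m).rpow_const (Or.inr hp1)
    have h₂ : HasDerivAt (fun u => p * m ^ (p - 1) * u) (p * m ^ (p - 1)) u := by
      simpa using (hasDerivAt_id u).const_mul (p * m ^ (p - 1))
    exact (h₁.sub h₂).sub (hasDerivAt_rpow_const (Or.inr hp1))
  have hmono : MonotoneOn f (Ici 0) := by
    refine monotoneOn_of_hasDerivWithinAt_nonneg (convex_Ici 0)
      (HasDerivAt.continuousOn fun u _ => hf u) (fun u _ => (hf u).hasDerivWithinAt) ?_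
    intro u hu
    rw [interior_Ici] at hu
    have := add_rpow_le_rpow_add (p := p - 1) hm hu.le (by linarith)
    nlinarith
  have := hmono self_mem_Ici hs hs
  simp only [f, add_zero, mul_zero, sub_zero, zero_rpow (by linarith : p ≠ 0)] at this
  linarith

lemma rpow_add_rpow_le_rpow_sub_add_tangent {p m s : ℝ} (hp : 2 ≤ p) (hs : 0 ≤ s)
    (hsm : s ≤ m) : m ^ p + s ^ p ≤ (m - s) ^ p + p * m ^ (p - 1) * s := by
  have hp1 : 1 ≤ p := by linarith
  set f : ℝ → ℝ := fun u => (m - u) ^ p + p * m ^ (p - 1) * u - u ^ p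
  have hf : ∀ u,
      HasDerivAt f (-(p * (m - u) ^ (p - 1)) + p * m ^ (p - 1) - p * u ^ (p - 1)) u := by
    intro u
    have h₁ : HasDerivAt (fun u => (m - u) ^ p) (-(p * (m - u) ^ (p - 1))) u := by
      simpa using ((hasDerivAt_id u).const_sub m).rpow_const (Or.inr hp1)
    have h₂ : HasDerivAt (fun u => p * m ^ (p - 1) * u) (p * m ^ (p - 1)) u := by
      simpa using (hasDerivAt_id u).const_mul (p * m ^ (p - 1))
    exact (h₁.add h₂).sub (hasDerivAt_rpow_const (Or.inr hp1))
  have hmono : MonotoneOn f (Icc 0 m) := by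
    refine monotoneOn_of_hasDerivWithinAt_nonneg (convex_Icc 0 m)
      (HasDerivAt.continuousOn fun u _ => hf u) (fun u _ => (hf u).hasDerivWithinAt) ?_
    intro u hu
    rw [interior_Icc] at hu
    have := add_rpow_le_rpow_add (p := p - 1) (sub_nonneg.2 hu.2.le) hu.1.le (by linarith)
    rw [sub_add_cancel] at this
    nlinarith
  have := hmono ⟨le_rfl, hs.trans hsm⟩ ⟨hs, hsm⟩ hs
  simp only [f, sub_zero, mul_zero, add_zero, zero_rpow (by linarith : p ≠ 0)] at this
  linarith

lemma abs_sub_rpow_add_rpow_add_tangent_le_rpow {p a m : ℝ} (hp : 2 ≤ p) (ha : 0 ≤ a)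
    (hm : 0 ≤ m) : |a - m| ^ p + m ^ p + p * m ^ (p - 1) * (a - m) ≤ a ^ p := by
  rcases le_total m a with hma | ham
  · have := rpow_add_tangent_add_rpow_le_rpow_add hp hm (sub_nonneg.2 hma)
    rw [add_sub_cancel] at this
    rw [abs_of_nonneg (sub_nonneg.2 hma)]
    linarith
  · have := rpow_add_rpow_le_rpow_sub_add_tangent hp (sub_nonneg.2 ham) (sub_le_self m ha)
    rw [sub_sub_cancel] at this
    rw [abs_sub_comm, abs_of_nonneg (sub_nonneg.2 ham)]
    linarith

end Real

section Average

variable {α : Type*} [MeasurableSpace α] {μ : Measure α} {p : ℝ} {f : α → ℝ}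

theorem integral_rpow_add_integral_abs_sub_rpow_le [IsProbabilityMeasure μ] (hp : 2 ≤ p)
    (hf₀ : 0 ≤ᵐ[μ] f) (hf : MemLp f (ENNReal.ofReal p) μ) :
    (∫ a, f a ∂μ) ^ p + ∫ a, |f a - ∫ b, f b ∂μ| ^ p ∂μ ≤ ∫ a, f a ^ p ∂μ := by
  set m := ∫ a, f a ∂μ
  have hp₀ : 0 ≤ p := by linarith
  have hm : 0 ≤ m := integral_nonneg_of_ae hf₀
  have hf₁ : Integrable f μ := hf.integrable (by simpa using hp.trans' one_le_two)
  have hdev : Integrable (fun a => |f a - m| ^ p) μ := by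
    simpa [ENNReal.toReal_ofReal hp₀] using (hf.sub (memLp_const m)).integrable_norm_rpow'
  have hpow : Integrable (fun a => f a ^ p) μ := by
    refine hf.integrable_norm_rpow'.congr (hf₀.mono fun a ha => ?_)
    simp [ENNReal.toReal_ofReal hp₀, abs_of_nonneg ha]
  have hlin : Integrable (fun a => p * m ^ (p - 1) * (f a - m)) μ :=
    (hf₁.sub (integrable_const m)).const_mul _
  have hsum : Integrable (fun a => |f a - m| ^ p + m ^ p) μ := hdev.add (integrable_const _)
  calc m ^ p + ∫ a, |f a - m| ^ p ∂μ
      = ∫ a, |f a - m| ^ p + m ^ p + p * m ^ (p - 1) * (f a - m) ∂μ := by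
        rw [integral_add hsum hlin, integral_add hdev (integrable_const _),
          integral_const_mul, integral_sub hf₁ (integrable_const m)]
        simp only [integral_const, probReal_univ, one_smul]
        ring
    _ ≤ ∫ a, f a ^ p ∂μ :=
        integral_mono_ae (hsum.add hlin) hpow
          (hf₀.mono fun a ha => Real.abs_sub_rpow_add_rpow_add_tangent_le_rpow hp ha hm)

theorem average_rpow_add_average_abs_sub_rpow_le [IsFiniteMeasure μ] (hp : 2 ≤ p)
    (hf₀ : 0 ≤ᵐ[μ] f) (hf : MemLp f (ENNReal.ofReal p) μ) :
    (⨍ a, f a ∂μ) ^ p + ⨍ a, |f a - ⨍ b, f b ∂μ| ^ p ∂μ ≤ ⨍ a, f a ^ p ∂μ := by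
  rcases eq_zero_or_neZero μ with rfl | hμ
  · simp [Real.zero_rpow (by linarith : p ≠ 0)]
  -- `⨍ · ∂μ` is by definition the integral against the probability measure `(μ univ)⁻¹ • μ`.
  exact integral_rpow_add_integral_abs_sub_rpow_le hp (Measure.ae_smul_measure hf₀ _)
    (hf.smul_measure (ENNReal.inv_ne_top.2 (NeZero.ne _)))

theorem integral_le_integral_sub_of_add_le {f₁ f₂ h : α → ℝ} (hh : Integrable h μ)
    (hf₁ : AEStronglyMeasurable f₁ μ) (hf₂ : AEStronglyMeasurable f₂ μ) (h₁ : 0 ≤ᵐ[μ] f₁)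
    (h₂ : 0 ≤ᵐ[μ] f₂) (hle : ∀ᵐ a ∂μ, f₁ a + f₂ a ≤ h a) :
    ∫ a, f₁ a ∂μ ≤ ∫ a, h a ∂μ - ∫ a, f₂ a ∂μ := by
  have hi₁ : Integrable f₁ μ := hh.mono' hf₁ <| by
    filter_upwards [h₁, h₂, hle] with a (ha₁ : 0 ≤ f₁ a) (ha₂ : 0 ≤ f₂ a) ha
    rw [Real.norm_eq_abs, abs_of_nonneg ha₁]
    linarith
  have hi₂ : Integrable f₂ μ := hh.mono' hf₂ <| by
    filter_upwards [h₁, h₂, hle] with a (ha₁ : 0 ≤ f₁ a) (ha₂ : 0 ≤ f₂ a) ha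
    rw [Real.norm_eq_abs, abs_of_nonneg ha₂]
    linarith
  rw [le_sub_iff_add_le, ← integral_add hi₁ hi₂]
  exact integral_mono_ae (hi₁.add hi₂) hh hle

end Average

section Interval

theorem setAverage_Ioo_eq (f : ℝ → ℝ) (a b : ℝ) :
    ⨍ t in Ioo a b, f t = (b - a)⁻¹ * ∫ t in Ioo a b, f t := by
  rcases le_total a b with hab | hba
  · rw [setAverage_eq, Real.volume_real_Ioo_of_le hab, smul_eq_mul]
  · simp [Ioo_eq_empty_of_le hba]

theorem setAverage_Ioo_nonneg {f : ℝ → ℝ} {a b : ℝ} (hf : ∀ t ∈ Ioo a b, 0 ≤ f t) :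
    0 ≤ ⨍ t in Ioo a b, f t := by
  rw [setAverage_eq]
  exact smul_nonneg (inv_nonneg.2 measureReal_nonneg) (setIntegral_nonneg measurableSet_Ioo hf)

theorem measurable_setAverage_Ioo {F : ℝ → ℝ → ℝ} (hF : Measurable (Function.uncurry F))
    (a : ℝ) : Measurable fun x => ⨍ t in Ioo a x, F x t := by
  set G := {q : ℝ × ℝ | a < q.2 ∧ q.2 < q.1}.indicator (Function.uncurry F)
  have hG : Measurable G := hF.indicator ((measurableSet_lt measurable_const measurable_snd).inter
    (measurableSet_lt measurable_snd measurable_fst))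
  have hsection : (fun x => ∫ t in Ioo a x, F x t) = fun x => ∫ t, G (x, t) := by
    ext x
    rw [← integral_indicator measurableSet_Ioo]
    rfl
  simp_rw [setAverage_Ioo_eq]
  exact (measurable_id.sub_const a).inv.mul
    (hsection ▸ hG.stronglyMeasurable.integral_prod_right'.measurable)

theorem integrableOn_Ioo_of_integrableOn_Ioi_div {h : ℝ → ℝ}
    (hint : IntegrableOn (fun t => h t / t) (Ioi 0)) (x : ℝ) : IntegrableOn h (Ioo 0 x) := by
  have hbdd : ∀ᵐ t ∂volume.restrict (Ioo 0 x), ‖t‖ ≤ x :=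
    ae_restrict_of_forall_mem measurableSet_Ioo fun t ht => by
      rw [Real.norm_eq_abs, abs_of_pos ht.1]
      exact ht.2.le
  refine ((hint.mono_set Ioo_subset_Ioi_self).mul_bdd measurable_id.aestronglyMeasurable
    hbdd).congr (ae_restrict_of_forall_mem measurableSet_Ioo fun t ht => ?_)
  exact div_mul_cancel₀ _ ht.1.ne'

theorem lintegral_Ioi_ofReal_inv_sq {t : ℝ} (ht : 0 < t) :
    ∫⁻ x in Ioi t, ENNReal.ofReal (x ^ 2)⁻¹ = ENNReal.ofReal t⁻¹ := by
  have hint : IntegrableOn (fun x : ℝ => x ^ (-2 : ℝ)) (Ioi t) :=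
    integrableOn_Ioi_rpow_of_lt (by norm_num) ht
  have hnn : 0 ≤ᵐ[volume.restrict (Ioi t)] fun x : ℝ => x ^ (-2 : ℝ) :=
    ae_restrict_of_forall_mem measurableSet_Ioi fun x hx => Real.rpow_nonneg (ht.trans hx).le _
  rw [setLIntegral_congr_fun measurableSet_Ioi (g := fun x => ENNReal.ofReal (x ^ (-2 : ℝ)))
      fun x hx => by dsimp only; rw [Real.rpow_neg (ht.trans hx).le, Real.rpow_two],
    ← ofReal_integral_eq_lintegral_ofReal hint hnn, integral_Ioi_rpow_of_lt (by norm_num) ht]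
  norm_num [Real.rpow_neg_one]

theorem lintegral_Ioi_ofReal_inv_sq_mul_lintegral_Ioo {h : ℝ → ℝ≥0∞} (hh : Measurable h) :
    ∫⁻ x in Ioi 0, ENNReal.ofReal (x ^ 2)⁻¹ * ∫⁻ t in Ioo 0 x, h t
      = ∫⁻ t in Ioi 0, ENNReal.ofReal t⁻¹ * h t := by
  have hIoo : ∀ x, ∫⁻ t in Ioo 0 x, h t = ∫⁻ t in Ioi 0, (Iio x).indicator h t := fun x => by
    rw [lintegral_indicator measurableSet_Iio, Measure.restrict_restrict measurableSet_Iio,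
      Iio_inter_Ioi]
  have hmeas : Measurable (Function.uncurry fun x t : ℝ =>
      ENNReal.ofReal (x ^ 2)⁻¹ * (Iio x).indicator h t) := by
    have hind : Measurable fun q : ℝ × ℝ => (Iio q.1).indicator h q.2 := by
      have : (fun q : ℝ × ℝ => (Iio q.1).indicator h q.2)
          = {q : ℝ × ℝ | q.2 < q.1}.indicator fun q => h q.2 := by
        ext ⟨x, t⟩
        by_cases htx : t < x <;> simp [htx]
      rw [this]
      exact (hh.comp measurable_snd).indicator (measurableSet_lt measurable_snd measurable_fst)
    exact (measurable_fst.pow_const 2).inv.ennreal_ofReal.mul hind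
  calc ∫⁻ x in Ioi 0, ENNReal.ofReal (x ^ 2)⁻¹ * ∫⁻ t in Ioo 0 x, h t
      = ∫⁻ x in Ioi 0, ∫⁻ t in Ioi 0, ENNReal.ofReal (x ^ 2)⁻¹ * (Iio x).indicator h t := by
        simp_rw [hIoo, lintegral_const_mul' _ _ ENNReal.ofReal_ne_top]
    _ = ∫⁻ t in Ioi 0, ∫⁻ x in Ioi 0, ENNReal.ofReal (x ^ 2)⁻¹ * (Iio x).indicator h t :=
        lintegral_lintegral_swap hmeas.aemeasurable
    _ = ∫⁻ t in Ioi 0, ENNReal.ofReal t⁻¹ * h t := by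
        refine setLIntegral_congr_fun measurableSet_Ioi fun t (ht : 0 < t) => ?_
        have hind : ∀ x, ENNReal.ofReal (x ^ 2)⁻¹ * (Iio x).indicator h t
            = (Ioi t).indicator (fun x => ENNReal.ofReal (x ^ 2)⁻¹ * h t) x := fun x => by
          by_cases htx : t < x <;> simp [htx]
        rw [lintegral_congr hind, lintegral_indicator measurableSet_Ioi,
          Measure.restrict_restrict measurableSet_Ioi, Ioi_inter_Ioi, max_eq_left ht.le,
          lintegral_mul_const _ (by fun_prop), lintegral_Ioi_ofReal_inv_sq ht]

theorem lintegral_Ioi_ofReal_setAverage_Ioo_div {h : ℝ → ℝ} (hmeas : Measurable h)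
    (hnn : ∀ t ∈ Ioi 0, 0 ≤ h t) (hint : IntegrableOn (fun t => h t / t) (Ioi 0)) :
    ∫⁻ x in Ioi 0, ENNReal.ofReal ((⨍ t in Ioo 0 x, h t) / x)
      = ∫⁻ t in Ioi 0, ENNReal.ofReal (h t / t) := by
  convert lintegral_Ioi_ofReal_inv_sq_mul_lintegral_Ioo hmeas.ennreal_ofReal using 1
    <;> refine setLIntegral_congr_fun measurableSet_Ioi fun x (hx : 0 < x) => ?_
  · have hnn' : 0 ≤ᵐ[volume.restrict (Ioo 0 x)] h :=
      ae_restrict_of_forall_mem measurableSet_Ioo fun t ht => hnn t ht.1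
    rw [setAverage_Ioo_eq, sub_zero, ← ofReal_integral_eq_lintegral_ofReal
      (integrableOn_Ioo_of_integrableOn_Ioi_div hint x) hnn',
      ← ENNReal.ofReal_mul (by positivity)]
    congr 1
    field_simp
  · rw [div_eq_mul_inv, mul_comm, ENNReal.ofReal_mul (by positivity)]

theorem integrableOn_Ioi_setAverage_Ioo_div {h : ℝ → ℝ} (hmeas : Measurable h)
    (hnn : ∀ t ∈ Ioi 0, 0 ≤ h t) (hint : IntegrableOn (fun t => h t / t) (Ioi 0)) :
    IntegrableOn (fun x => (⨍ t in Ioo 0 x, h t) / x) (Ioi 0) := by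
  have hnn' : 0 ≤ᵐ[volume.restrict (Ioi 0)] fun x => (⨍ t in Ioo 0 x, h t) / x :=
    ae_restrict_of_forall_mem measurableSet_Ioi fun x (hx : 0 < x) =>
      div_nonneg (setAverage_Ioo_nonneg fun t ht => hnn t ht.1) hx.le
  have hdiv : 0 ≤ᵐ[volume.restrict (Ioi 0)] fun t => h t / t :=
    ae_restrict_of_forall_mem measurableSet_Ioi fun t (ht : 0 < t) => div_nonneg (hnn t ht) ht.le
  refine ⟨((measurable_setAverage_Ioo (F := fun _ t => h t) (hmeas.comp measurable_snd) 0).div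
    measurable_id).aestronglyMeasurable, (hasFiniteIntegral_iff_ofReal hnn').2 ?_⟩
  rw [lintegral_Ioi_ofReal_setAverage_Ioo_div hmeas hnn hint]
  exact (hasFiniteIntegral_iff_ofReal hdiv).1 hint.2

theorem integral_Ioi_setAverage_Ioo_div {h : ℝ → ℝ} (hmeas : Measurable h)
    (hnn : ∀ t ∈ Ioi 0, 0 ≤ h t) (hint : IntegrableOn (fun t => h t / t) (Ioi 0)) :
    ∫ x in Ioi 0, (⨍ t in Ioo 0 x, h t) / x = ∫ t in Ioi 0, h t / t := by
  have hnn' : 0 ≤ᵐ[volume.restrict (Ioi 0)] fun x => (⨍ t in Ioo 0 x, h t) / x :=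
    ae_restrict_of_forall_mem measurableSet_Ioi fun x (hx : 0 < x) =>
      div_nonneg (setAverage_Ioo_nonneg fun t ht => hnn t ht.1) hx.le
  have hdiv : 0 ≤ᵐ[volume.restrict (Ioi 0)] fun t => h t / t :=
    ae_restrict_of_forall_mem measurableSet_Ioi fun t (ht : 0 < t) => div_nonneg (hnn t ht) ht.le
  rw [integral_eq_lintegral_of_nonneg_ae hnn'
      (integrableOn_Ioi_setAverage_Ioo_div hmeas hnn hint).aestronglyMeasurable,
    integral_eq_lintegral_of_nonneg_ae hdiv hint.aestronglyMeasurable,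
    lintegral_Ioi_ofReal_setAverage_Ioo_div hmeas hnn hint]

end Interval

theorem memLp_restrict_Ioo_of_integrableOn_Ioi_rpow_div {p : ℝ} (hp : 0 < p) {g : ℝ → ℝ}
    (hg_meas : Measurable g) (hg_nonneg : ∀ t ∈ Ioi 0, 0 ≤ g t)
    (hg_int : IntegrableOn (fun t => g t ^ p / t) (Ioi 0)) (x : ℝ) :
    MemLp g (ENNReal.ofReal p) (volume.restrict (Ioo 0 x)) := by
  rw [← integrable_norm_rpow_iff hg_meas.aestronglyMeasurable (by simpa using hp)
    ENNReal.ofReal_ne_top, ENNReal.toReal_ofReal hp.le]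
  refine (integrableOn_Ioo_of_integrableOn_Ioi_div hg_int x).congr
    (ae_restrict_of_forall_mem measurableSet_Ioo fun t ht => ?_)
  simp [abs_of_nonneg (hg_nonneg t ht.1)]

theorem hardy_lemma_scalar (p : ℝ) (hp : 2 ≤ p) (g : ℝ → ℝ)
    (hg_meas : Measurable g) (hg_nonneg : ∀ t ∈ Ioi (0:ℝ), 0 ≤ g t)
    (hg_int : IntegrableOn (fun t => g t ^ p / t) (Ioi (0:ℝ))) :
    ∫ x in Ioi (0:ℝ), ((1/x) * ∫ t in Ioo (0:ℝ) x, g t) ^ p / x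
      ≤ (∫ t in Ioi (0:ℝ), g t ^ p / t)
        - ∫ x in Ioi (0:ℝ),
            ((1/x) * ∫ t in Ioo (0:ℝ) x,
              |g t - (1/x) * ∫ s in Ioo (0:ℝ) x, g s| ^ p) / x := by
  have hmean (f : ℝ → ℝ) (x : ℝ) : 1 / x * ∫ t in Ioo 0 x, f t = ⨍ t in Ioo 0 x, f t := by
    rw [setAverage_Ioo_eq, sub_zero, one_div]
  simp_rw [hmean]
  have hgp_meas : Measurable fun t => g t ^ p := hg_meas.pow_const p
  have hgp_nonneg : ∀ t ∈ Ioi (0:ℝ), 0 ≤ g t ^ p :=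
    fun t ht => Real.rpow_nonneg (hg_nonneg t ht) p
  have hA : Measurable fun x => ⨍ t in Ioo 0 x, g t :=
    measurable_setAverage_Ioo (F := fun _ t => g t) (hg_meas.comp measurable_snd) 0
  have hD : Measurable fun x => ⨍ t in Ioo 0 x, |g t - ⨍ s in Ioo 0 x, g s| ^ p :=
    measurable_setAverage_Ioo (F := fun x t => |g t - ⨍ s in Ioo 0 x, g s| ^ p)
      (((hg_meas.comp measurable_snd).sub (hA.comp measurable_fst)).abs.pow_const p) 0
  rw [← integral_Ioi_setAverage_Ioo_div hgp_meas hgp_nonneg hg_int]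
  refine integral_le_integral_sub_of_add_le
    (integrableOn_Ioi_setAverage_Ioo_div hgp_meas hgp_nonneg hg_int)
    ((hA.pow_const p).div measurable_id).aestronglyMeasurable
    (hD.div measurable_id).aestronglyMeasurable ?_ ?_ ?_ <;>
    refine ae_restrict_of_forall_mem measurableSet_Ioi fun x (hx : 0 < x) => ?_
  · exact div_nonneg
      (Real.rpow_nonneg (setAverage_Ioo_nonneg fun t ht => hg_nonneg t ht.1) p) hx.le
  · exact div_nonneg (setAverage_Ioo_nonneg fun t _ => Real.rpow_nonneg (abs_nonneg _) p) hx.le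
  · rw [← add_div]
    exact div_le_div_of_nonneg_right (average_rpow_add_average_abs_sub_rpow_le hp
      (ae_restrict_of_forall_mem measurableSet_Ioo fun t ht => hg_nonneg t ht.1)
      (memLp_restrict_Ioo_of_integrableOn_Ioi_rpow_div (by linarith) hg_meas hg_nonneg hg_int x))
      hx.le
end

section
/- ∫₀^∞ (1/x) ∫₀^x √(x/t) · | √(t/x)·1/(t+1) − (1/(2x)) log(1+x) |² dt dx = 2 − π²/6. -/
/-!
Expanding the square, the inner integral is elementary: for `x > 0` it equals
`arctan √x / √x - 1 / (1 + x) - log (1 + x) ^ 2 / (2 * x)`.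
After division by `x`, the first two terms have the antiderivative `-2 * arctan √x / √x`, which
increases from `-2` to `0` on `(0, ∞)`, so they contribute `2`.
For the last term, the substitution `1 + x = exp s` and the expansion
`exp s / (exp s - 1) ^ 2 = ∑ n * exp (-n * s)` give
`∫ log (1 + x) ^ 2 / x ^ 2 = ∑ n * ∫ s ^ 2 * exp (-n * s) = ∑ 2 / n ^ 2 = π ^ 2 / 3`.
-/

open MeasureTheory Set Real Filter Topology

lemma div_one_add_sq_le_arctan {u : ℝ} (hu : 0 ≤ u) : u / (1 + u ^ 2) ≤ arctan u := by
  have h : u / (1 + u ^ 2) = sin (2 * arctan u) / 2 := by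
    have : 0 < 1 + u ^ 2 := by positivity
    rw [sin_two_mul, sin_arctan, cos_arctan]
    field_simp
    rw [sq_sqrt this.le]
  rw [h, div_le_iff₀ two_pos, mul_comm]
  exact sin_le (by positivity)

lemma dslope_arctan_zero_of_ne {u : ℝ} (hu : u ≠ 0) : dslope arctan 0 u = arctan u / u := by
  rw [dslope_of_ne _ hu, slope_def_field, arctan_zero, sub_zero, sub_zero]

-- The antiderivative `-2 * arctan √y / √y`, made continuous at `y = 0` through `dslope`.
lemma hasDerivAt_dslope_arctan_sqrt {x : ℝ} (hx : 0 < x) :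
    HasDerivAt (fun y => -2 * dslope arctan 0 √y)
      (arctan √x / (x * √x) - 1 / (x * (1 + x))) x := by
  have hr : 0 < √x := sqrt_pos.2 hx
  have hsq : √x ^ 2 = x := sq_sqrt hx.le
  have hEq : (fun y => -2 * (arctan √y / √y)) =ᶠ[𝓝 x] fun y => -2 * dslope arctan 0 √y := by
    filter_upwards [eventually_gt_nhds hx] with y hy
    rw [dslope_arctan_zero_of_ne (sqrt_pos.2 hy).ne']
  have hsqrt := hasDerivAt_sqrt hx.ne'
  have harctan := (hasDerivAt_arctan √x).comp x hsqrt
  refine (((harctan.div hsqrt hr.ne').const_mul (-2)).congr_of_eventuallyEq hEq.symm).congr_deriv ?_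
  simp only [Function.comp_apply, hsq]
  field_simp
  generalize √x = r at *
  subst hsq
  ring

lemma continuous_dslope_arctan_sqrt : Continuous fun y => dslope arctan 0 √y :=
  (continuousOn_univ.1 ((continuousOn_dslope univ_mem).2
    ⟨continuous_arctan.continuousOn, differentiable_arctan 0⟩)).comp continuous_sqrt

lemma tendsto_dslope_arctan_sqrt_atTop : Tendsto (fun y => dslope arctan 0 √y) atTop (𝓝 0) := by
  have h := (tendsto_arctan_atTop.mono_right nhdsWithin_le_nhds).comp tendsto_sqrt_atTop
  refine (h.div_atTop tendsto_sqrt_atTop).congr' ?_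
  filter_upwards [eventually_gt_atTop 0] with y hy
  rw [Function.comp_apply, dslope_arctan_zero_of_ne (sqrt_pos.2 hy).ne']

lemma one_div_mul_one_add_le_arctan_sqrt_div {x : ℝ} (hx : 0 < x) :
    1 / (x * (1 + x)) ≤ arctan √x / (x * √x) := by
  have hr : 0 < √x := sqrt_pos.2 hx
  have h := div_one_add_sq_le_arctan hr.le
  rw [sq_sqrt hx.le] at h
  calc 1 / (x * (1 + x)) = √x / (1 + x) / (x * √x) := by field_simp
    _ ≤ arctan √x / (x * √x) := by gcongr

lemma integrableOn_arctan_sqrt_div_sub :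
    IntegrableOn (fun x => arctan √x / (x * √x) - 1 / (x * (1 + x))) (Ioi 0) :=
  integrableOn_Ioi_deriv_of_nonneg
    (continuous_dslope_arctan_sqrt.const_mul (-2)).continuousWithinAt
    (fun _ hx => hasDerivAt_dslope_arctan_sqrt hx)
    (fun _ hx => sub_nonneg.2 (one_div_mul_one_add_le_arctan_sqrt_div hx))
    (by simpa using tendsto_dslope_arctan_sqrt_atTop.const_mul (-2))

lemma integral_arctan_sqrt_div_sub :
    ∫ x in Ioi (0:ℝ), (arctan √x / (x * √x) - 1 / (x * (1 + x))) = 2 := by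
  rw [integral_Ioi_of_hasDerivAt_of_nonneg
    (continuous_dslope_arctan_sqrt.const_mul (-2)).continuousWithinAt
    (fun _ hx => hasDerivAt_dslope_arctan_sqrt hx)
    (fun _ hx => sub_nonneg.2 (one_div_mul_one_add_le_arctan_sqrt_div hx))
    (by simpa using tendsto_dslope_arctan_sqrt_atTop.const_mul (-2))]
  simp [dslope_same]

lemma integral_sq_mul_exp_neg_mul {r : ℝ} (hr : 0 < r) :
    ∫ s in Ioi (0:ℝ), s ^ 2 * exp (-(r * s)) = 2 / r ^ 3 := by
  have h := integral_rpow_mul_exp_neg_mul_Ioi (a := 3) (by norm_num) hr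
  rw [Gamma_ofNat_eq_factorial, Nat.factorial_two, Nat.cast_ofNat, one_div, inv_rpow hr.le,
    show (3:ℝ) - 1 = (2:ℕ) by norm_num, rpow_ofNat] at h
  simpa only [rpow_natCast, div_eq_inv_mul] using h

lemma integrableOn_sq_mul_exp_neg_mul {r : ℝ} (hr : 0 < r) :
    IntegrableOn (fun s : ℝ => s ^ 2 * exp (-(r * s))) (Ioi 0) := by
  have := integrableOn_rpow_mul_exp_neg_mul_rpow (p := 1) (s := 2) (by norm_num) one_pos hr
  simpa only [rpow_one, neg_mul, ← rpow_ofNat] using this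

lemma hasSum_nat_mul_exp_neg_mul {s : ℝ} (hs : 0 < s) :
    HasSum (fun n : ℕ => n * exp (-(n * s))) (exp s / (exp s - 1) ^ 2) := by
  have hr : ‖exp (-s)‖ < 1 := by
    rw [norm_of_nonneg (exp_pos _).le, exp_lt_one_iff]; linarith
  have hs1 : exp s - 1 ≠ 0 := (sub_pos.2 (one_lt_exp_iff.2 hs)).ne'
  have hsum : exp s / (exp s - 1) ^ 2 = exp (-s) / (1 - exp (-s)) ^ 2 := by
    rw [exp_neg]; field_simp
  simpa only [hsum, ← exp_nat_mul, mul_neg] using hasSum_coe_mul_geometric_of_norm_lt_one hr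

lemma integral_sq_mul_exp_div_exp_sub_one_sq :
    ∫ s in Ioi (0:ℝ), s ^ 2 * (exp s / (exp s - 1) ^ 2) = π ^ 2 / 3 := by
  set F : ℕ → ℝ → ℝ := fun n s => n * (s ^ 2 * exp (-(n * s)))
  have hF : ∀ n : ℕ, ∫ s in Ioi (0:ℝ), F n s = 2 * (1 / (n:ℝ) ^ 2) := by
    intro n
    rcases n.eq_zero_or_pos with rfl | hn
    · simp [F]
    have hn' : (0:ℝ) < n := Nat.cast_pos.2 hn
    rw [integral_const_mul, integral_sq_mul_exp_neg_mul hn']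
    field_simp
  have hFint : ∀ n : ℕ, IntegrableOn (F n) (Ioi 0) := by
    intro n
    rcases n.eq_zero_or_pos with rfl | hn
    · simp [F]
    exact (integrableOn_sq_mul_exp_neg_mul (Nat.cast_pos.2 hn)).const_mul _
  have hFnorm : ∀ n : ℕ, ∫ s in Ioi (0:ℝ), ‖F n s‖ = 2 * (1 / (n:ℝ) ^ 2) := by
    intro n
    rw [← hF n]
    refine setIntegral_congr_fun measurableSet_Ioi fun s _ => norm_of_nonneg (by positivity)
  have hsum : ∀ s ∈ Ioi (0:ℝ), ∑' n, F n s = s ^ 2 * (exp s / (exp s - 1) ^ 2) := by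
    intro s hs
    rw [← ((hasSum_nat_mul_exp_neg_mul hs).mul_left (s ^ 2)).tsum_eq]
    congr 1; ext n; ring
  rw [← setIntegral_congr_fun measurableSet_Ioi hsum,
    ← integral_tsum_of_summable_integral_norm hFint
      (by simpa only [hFnorm] using (hasSum_zeta_two.mul_left 2).summable),
    tsum_congr hF, (hasSum_zeta_two.mul_left 2).tsum_eq]
  ring

lemma integral_log_one_add_sq_div_sq :
    ∫ x in Ioi (0:ℝ), log (1 + x) ^ 2 / x ^ 2 = π ^ 2 / 3 := by
  have himage : (fun s => exp s - 1) '' Ioi (0:ℝ) = Ioi 0 := by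
    rw [← image_image (fun y => y - 1) exp, image_exp_Ioi, image_sub_const_Ioi]; simp
  rw [← himage, integral_image_eq_integral_abs_deriv_smul measurableSet_Ioi
    (fun s _ => ((hasDerivAt_exp s).sub_const 1).hasDerivWithinAt)
    (fun a _ b _ h => exp_injective (sub_left_injective h)),
    ← integral_sq_mul_exp_div_exp_sub_one_sq]
  refine setIntegral_congr_fun measurableSet_Ioi fun s hs => ?_
  rw [abs_of_pos (exp_pos s), smul_eq_mul, add_sub_cancel, log_exp]
  ring

lemma continuousOn_sqrt_div_add_one_sq : ContinuousOn (fun t => √t / (t + 1) ^ 2) (Ici 0) :=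
  continuous_sqrt.continuousOn.div (by fun_prop) fun t (ht : 0 ≤ t) => by positivity

lemma integral_sqrt_div_add_one_sq {x : ℝ} (hx : 0 ≤ x) :
    ∫ t in (0:ℝ)..x, √t / (t + 1) ^ 2 = arctan √x - √x / (1 + x) := by
  have hderiv : ∀ t ∈ Ioo 0 x,
      HasDerivAt (fun t => arctan √t - √t / (1 + t)) (√t / (t + 1) ^ 2) t := by
    intro t ht
    have hsqrt := hasDerivAt_sqrt ht.1.ne'
    have h1t : 1 + t ≠ 0 := by linarith [ht.1]
    have ht1 : t + 1 ≠ 0 := by linarith [ht.1]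
    refine (((hasDerivAt_arctan √t).comp t hsqrt).sub
      (hsqrt.div ((hasDerivAt_id t).const_add 1) h1t)).congr_deriv ?_
    have hs : 0 < √t := sqrt_pos.2 ht.1
    have hsq : √t ^ 2 = t := sq_sqrt ht.1.le
    simp only [id, hsq]
    field_simp
    generalize √t = s at *
    subst hsq
    ring
  have h1t : ∀ t ∈ Icc 0 x, 1 + t ≠ 0 := fun t ht => by linarith [ht.1]
  rw [intervalIntegral.integral_eq_sub_of_hasDerivAt_of_le hx
    ((continuous_arctan.comp continuous_sqrt).continuousOn.sub (by fun_prop (disch := assumption)))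
    hderiv ((continuousOn_sqrt_div_add_one_sq.mono _).intervalIntegrable)]
  · simp
  · rw [uIcc_of_le hx]; exact Icc_subset_Ici_self

lemma integral_one_div_add_one {x : ℝ} (hx : 0 ≤ x) :
    ∫ t in (0:ℝ)..x, 1 / (t + 1) = log (1 + x) := by
  rw [intervalIntegral.integral_comp_add_right (fun t => 1 / t), zero_add,
    integral_one_div_of_pos one_pos (by linarith)]
  simp [add_comm]

lemma integral_sqrt_div_mul_sq_sub {x : ℝ} (hx : 0 < x) :
    ∫ t in Ioo (0:ℝ) x, √(x / t) * |√(t / x) * (1 / (t + 1)) - 1 / (2 * x) * log (1 + x)| ^ 2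
      = arctan √x / √x - 1 / (1 + x) - log (1 + x) ^ 2 / (2 * x) := by
  have hexpand : ∀ t ∈ Ioo 0 x,
      √(x / t) * |√(t / x) * (1 / (t + 1)) - 1 / (2 * x) * log (1 + x)| ^ 2
        = (√x)⁻¹ * (√t / (t + 1) ^ 2) - log (1 + x) / x * (1 / (t + 1))
          + log (1 + x) ^ 2 / (4 * x ^ 2) * √x * t ^ (-(1/2) : ℝ) := by
    intro t ht
    have hs : 0 < √t := sqrt_pos.2 ht.1
    have ht1 : t + 1 ≠ 0 := by linarith [ht.1]
    rw [sq_abs, sqrt_div hx.le, sqrt_div ht.1.le, rpow_neg ht.1.le, ← sqrt_eq_rpow]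
    have hsq : √t ^ 2 = t := sq_sqrt ht.1.le
    have hrsq : √x ^ 2 = x := sq_sqrt hx.le
    field_simp
    generalize √t = s at *
    generalize √x = r at *
    subst hsq hrsq
    ring
  have hsub : uIcc 0 x ⊆ Ici 0 := by rw [uIcc_of_le hx.le]; exact Icc_subset_Ici_self
  have hi1 : IntervalIntegrable (fun t => √t / (t + 1) ^ 2) volume 0 x :=
    (continuousOn_sqrt_div_add_one_sq.mono hsub).intervalIntegrable
  have hi2 : IntervalIntegrable (fun t : ℝ => 1 / (t + 1)) volume 0 x :=
    (continuousOn_const.div (by fun_prop) fun t ht =>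
      by linarith [mem_Ici.1 (hsub ht)]).intervalIntegrable
  have hi3 : IntervalIntegrable (fun t : ℝ => t ^ (-(1/2) : ℝ)) volume 0 x :=
    intervalIntegral.intervalIntegrable_rpow' (by norm_num)
  rw [setIntegral_congr_fun measurableSet_Ioo hexpand, ← integral_Ioc_eq_integral_Ioo,
    ← intervalIntegral.integral_of_le hx.le,
    intervalIntegral.integral_add ((hi1.const_mul _).sub (hi2.const_mul _)) (hi3.const_mul _),
    intervalIntegral.integral_sub (hi1.const_mul _) (hi2.const_mul _),
    intervalIntegral.integral_const_mul, intervalIntegral.integral_const_mul,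
    intervalIntegral.integral_const_mul,
    integral_sqrt_div_add_one_sq hx.le, integral_one_div_add_one hx.le,
    integral_rpow (by norm_num)]
  norm_num [← sqrt_eq_rpow]
  have hrsq : √x ^ 2 = x := sq_sqrt hx.le
  field_simp
  generalize √x = r at *
  subst hrsq
  ring

lemma log_one_add_sq_div_sq_le {x : ℝ} (hx : 0 < x) :
    log (1 + x) ^ 2 / x ^ 2 ≤ 2 * (arctan √x / (x * √x) - 1 / (x * (1 + x))) := by
  have hnonneg : 0 ≤ ∫ t in Ioo (0:ℝ) x,
      √(x / t) * |√(t / x) * (1 / (t + 1)) - 1 / (2 * x) * log (1 + x)| ^ 2 :=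
    setIntegral_nonneg measurableSet_Ioo fun t _ => by positivity
  rw [integral_sqrt_div_mul_sq_sub hx] at hnonneg
  have hsplit : 2 * (arctan √x / (x * √x) - 1 / (x * (1 + x))) - log (1 + x) ^ 2 / x ^ 2
      = 2 * ((arctan √x / √x - 1 / (1 + x) - log (1 + x) ^ 2 / (2 * x)) / x) := by
    field_simp
  linarith [div_nonneg hnonneg hx.le]

lemma integrableOn_log_one_add_sq_div_sq :
    IntegrableOn (fun x => log (1 + x) ^ 2 / x ^ 2) (Ioi 0) := by
  refine Integrable.mono' (integrableOn_arctan_sqrt_div_sub.const_mul 2)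
    (Measurable.aestronglyMeasurable (by fun_prop)) ?_
  filter_upwards [ae_restrict_mem measurableSet_Ioi] with x hx
  rw [norm_of_nonneg (by positivity)]
  exact log_one_add_sq_div_sq_le hx

theorem example_refinement_term :
    ∫ x in Ioi (0:ℝ), (1/x) * ∫ t in Ioo (0:ℝ) x,
        Real.sqrt (x/t) *
          |Real.sqrt (t/x) * (1/(t+1)) - (1/(2*x)) * Real.log (1+x)| ^ (2:ℕ)
      = 2 - π ^ 2 / 6 := by
  have hdecomp : ∀ x ∈ Ioi (0:ℝ), (1/x) * ∫ t in Ioo (0:ℝ) x,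
        √(x/t) * |√(t/x) * (1/(t+1)) - (1/(2*x)) * log (1+x)| ^ (2:ℕ)
      = (arctan √x / (x * √x) - 1 / (x * (1 + x))) - 1 / 2 * (log (1 + x) ^ 2 / x ^ 2) := by
    intro x (hx : 0 < x)
    rw [integral_sqrt_div_mul_sq_sub hx]
    field_simp
  rw [setIntegral_congr_fun measurableSet_Ioi hdecomp,
    integral_sub integrableOn_arctan_sqrt_div_sub (integrableOn_log_one_add_sq_div_sq.const_mul _),
    integral_arctan_sqrt_div_sub, integral_const_mul, integral_log_one_add_sq_div_sq]
  ring
end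

section
/- Let g : [0,∞) → ℝ be continuous and convex, A a positive bounded operator on a Hilbert space H, and η ∈ H a unit vector. Then g(⟨Aη, η⟩) ≤ ⟨g(A)η, η⟩. -/
/-!
Jensen's inequality for the vector state `T ↦ ⟪T η, η⟫`: an affine minorant `ℓ` of `g` on
`[0, ∞)` satisfies `ℓ(A) ≤ g(A)` by monotonicity of the functional calculus, hence
`ℓ(⟪A η, η⟫) ≤ ⟪g(A) η, η⟫`. Supporting lines are only available at interior points, and
`a = ⟪A η, η⟫` may be `0`, so we use the supporting line at `a + ε`; its value at `a` is at least
`2 g(a + ε) - g(a + 2ε)`, which tends to `g(a)` as `ε → 0⁺` by continuity of `g`.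
-/

open scoped InnerProductSpace
open Set Filter Topology

namespace ConvexOn
variable {S : Set ℝ} {f : ℝ → ℝ}

theorem add_rightDeriv_mul_sub_le (hf : ConvexOn ℝ S f) {x y : ℝ} (hx : x ∈ interior S)
    (hy : y ∈ S) : f x + derivWithin f (Ioi x) x * (y - x) ≤ f y := by
  rcases lt_trichotomy y x with hyx | rfl | hxy
  · have h := (hf.slope_le_leftDeriv_of_mem_interior hy hx hyx).trans
      (hf.leftDeriv_le_rightDeriv_of_mem_interior hx)
    rw [slope_def_field, div_le_iff₀ (sub_pos.2 hyx)] at h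
    linarith
  · simp
  · have h := hf.rightDeriv_le_slope_of_mem_interior hx hy hxy
    rw [slope_def_field, le_div_iff₀ (sub_pos.2 hxy)] at h
    linarith

theorem exists_affine_minorant_two_mul_sub_le (hf : ConvexOn ℝ S f) {x ε : ℝ}
    (hε : 0 < ε) (h₁ : x + ε ∈ interior S) (h₂ : x + 2 * ε ∈ S) :
    ∃ α c : ℝ, (∀ y ∈ S, α + c * y ≤ f y) ∧ 2 * f (x + ε) - f (x + 2 * ε) ≤ α + c * x := by
  set b := x + ε
  set c := derivWithin f (Ioi b) b
  refine ⟨f b - c * b, c, fun y hy => ?_, ?_⟩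
  · linarith [hf.add_rightDeriv_mul_sub_le h₁ hy]
  · have h := hf.rightDeriv_le_slope_of_mem_interior h₁ h₂ (by linarith)
    rw [slope_def_field, show x + 2 * ε - b = ε by ring, le_div_iff₀ hε] at h
    have : c * x = c * b - c * ε := by ring
    linarith

end ConvexOn

theorem ContinuousWithinAt.tendsto_two_mul_sub {g : ℝ → ℝ} {a : ℝ}
    (hg : ContinuousWithinAt g (Ici a) a) :
    Tendsto (fun ε => 2 * g (a + ε) - g (a + 2 * ε)) (𝓝[>] 0) (𝓝 (g a)) := by
  have hshift : ∀ k : ℝ, 0 < k → Tendsto (fun ε => g (a + k * ε)) (𝓝[>] 0) (𝓝 (g a)) := by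
    intro k hk
    refine hg.tendsto.comp (tendsto_nhdsWithin_of_tendsto_nhds_of_eventually_within _ ?_ ?_)
    · exact (Continuous.tendsto' (by fun_prop) 0 a (by simp)).mono_left nhdsWithin_le_nhds
    · filter_upwards [self_mem_nhdsWithin] with ε (hε : 0 < ε)
      simp only [mem_Ici, le_add_iff_nonneg_right]
      positivity
  simpa [two_mul] using ((hshift 1 one_pos).const_mul 2).sub (hshift 2 two_pos)

namespace ContinuousLinearMap
variable {𝕜 E : Type*} [RCLike 𝕜] [NormedAddCommGroup E] [InnerProductSpace 𝕜 E]

theorem re_inner_le_re_inner_of_le {S T : E →L[𝕜] E} (h : S ≤ T) (x : E) :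
    RCLike.re ⟪S x, x⟫_𝕜 ≤ RCLike.re ⟪T x, x⟫_𝕜 := by
  have := ((le_def S T).mp h).re_inner_nonneg_left x
  rw [sub_apply, inner_sub_left, map_sub] at this
  linarith

end ContinuousLinearMap

section
variable {H : Type*} [NormedAddCommGroup H] [InnerProductSpace ℂ H] [CompleteSpace H]

theorem IsSelfAdjoint.re_inner_cfc_const_add_mul {A : H →L[ℂ] H} (hA : IsSelfAdjoint A)
    (α c : ℝ) (η : H) :
    RCLike.re ⟪cfc (fun x => α + c * x) A η, η⟫_ℂ = α * ‖η‖ ^ 2 + c * RCLike.re ⟪A η, η⟫_ℂ := by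
  rw [cfc_const_add α _ A, cfc_const_mul_id c A, Algebra.algebraMap_eq_smul_one, add_apply,
    smul_apply, smul_apply, one_apply_eq_self, inner_add_left,
    inner_smul_left_eq_smul, inner_smul_left_eq_smul, map_add, RCLike.smul_re, RCLike.smul_re,
    inner_self_eq_norm_sq]

theorem IsSelfAdjoint.add_mul_re_inner_le_re_inner_cfc {A : H →L[ℂ] H} (hA : IsSelfAdjoint A)
    {g : ℝ → ℝ} (hg : ContinuousOn g (spectrum ℝ A)) {α c : ℝ}
    (hαc : ∀ x ∈ spectrum ℝ A, α + c * x ≤ g x)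
    {η : H} (hη : ‖η‖ = 1) :
    α + c * RCLike.re ⟪A η, η⟫_ℂ ≤ RCLike.re ⟪cfc g A η, η⟫_ℂ := by
  have := ContinuousLinearMap.re_inner_le_re_inner_of_le (cfc_mono hαc (by fun_prop) hg) η
  rwa [hA.re_inner_cfc_const_add_mul, hη, one_pow, mul_one] at this

end

theorem convex_trace_inequality {H : Type*} [NormedAddCommGroup H]
    [InnerProductSpace ℂ H] [CompleteSpace H]
    (g : ℝ → ℝ) (hg_cont : ContinuousOn g (Set.Ici (0:ℝ)))
    (hg_conv : ConvexOn ℝ (Set.Ici (0:ℝ)) g)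
    (A : H →L[ℂ] H) (hA : 0 ≤ A)
    (η : H) (hη : ‖η‖ = 1) :
    g (RCLike.re ⟪A η, η⟫_ℂ) ≤ RCLike.re ⟪(cfc g A) η, η⟫_ℂ := by
  have hApos : A.IsPositive := (ContinuousLinearMap.nonneg_iff_isPositive A).mp hA
  set a := RCLike.re ⟪A η, η⟫_ℂ
  have ha : 0 ≤ a := hApos.re_inner_nonneg_left η
  have hspec : spectrum ℝ A ⊆ Ici 0 := fun x hx => spectrum_nonneg_of_nonneg hA hx
  have hbound : ∀ ε > 0, 2 * g (a + ε) - g (a + 2 * ε) ≤ RCLike.re ⟪cfc g A η, η⟫_ℂ := by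
    intro ε hε
    obtain ⟨α, c, hminor, hle⟩ := hg_conv.exists_affine_minorant_two_mul_sub_le hε
      (by rw [interior_Ici]; exact add_pos_of_nonneg_of_pos ha hε)
      (by simp only [mem_Ici]; positivity)
    exact hle.trans <| hApos.isSelfAdjoint.add_mul_re_inner_le_re_inner_cfc (hg_cont.mono hspec)
      (fun x hx => hminor x (hspec hx)) hη
  have hg_cont_a : ContinuousWithinAt g (Ici a) a := (hg_cont a ha).mono (Ici_subset_Ici.2 ha)
  exact le_of_tendsto hg_cont_a.tendsto_two_mul_sub (eventually_nhdsWithin_of_forall hbound)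
end

section
/- Let f : [0,∞) → ℝ be a continuous superquadratic function, A, B positive bounded operators on a Hilbert space H, and x, y ∈ H with ‖x‖² − ‖y‖² = 1 and ⟨Ax,x⟩ − ⟨By,y⟩ ≥ 0. Then f(⟨Ax,x⟩ − ⟨By,y⟩) ≥ ‖x‖² f(⟨Ax,x⟩/‖x‖²) − ⟨f(B)y,y⟩ + ⟨f(|B − (1/‖y‖²)⟨By,y⟩·I|)y,y⟩ + f(‖y‖² |⟨Ax,x⟩/‖x‖² − ⟨By,y⟩/‖y‖²|) + ‖y‖² f(|⟨Ax,x⟩/‖x‖² − ⟨By,y⟩/‖y‖²|). -/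
/-! Superquadraticity of `f` at `μ = ⟪B y, y⟫ / ‖y‖²`, applied on the spectrum of `B` through the
functional calculus and paired with `y`, gives the operator Jensen inequality
`‖y‖² f(μ) + ⟪f(|B - μ|) y, y⟫ ≤ ⟪f(B) y, y⟫`; the linear term drops out because
`⟪(B - μ) y, y⟫ = 0`. With `s = ‖y‖²` and `ν = ⟪A x, x⟫ / ‖x‖²` we have `‖x‖² = 1 + s` and
`⟪A x, x⟫ - ⟪B y, y⟫ = (1 + s) ν - s μ`, and superquadraticity at `ν`, evaluated at this point and
at `μ`, gives `f((1 + s) ν - s μ) ≥ (1 + s) f(ν) - s f(μ) + f(s |ν - μ|) + s f(|ν - μ|)`.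
Eliminating `s f(μ)` between the two inequalities gives the claim. -/

open scoped InnerProductSpace
open Set

def Superquadratic (f : ℝ → ℝ) : Prop :=
  ∀ a : ℝ, 0 ≤ a → ∃ C : ℝ, ∀ b : ℝ, 0 ≤ b → f b ≥ f a + C * (b - a) + f |b - a|

namespace Superquadratic

variable {f : ℝ → ℝ}

theorem external_jensen (hf : Superquadratic f) {s μ ν : ℝ} (hs : 0 ≤ s) (hμ : 0 ≤ μ)
    (hν : 0 ≤ ν) (h : 0 ≤ (1 + s) * ν - s * μ) :
    (1 + s) * f ν - s * f μ + f (s * |ν - μ|) + s * f |ν - μ| ≤ f ((1 + s) * ν - s * μ) := by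
  obtain ⟨C, hC⟩ := hf ν hν
  have at_point := hC _ h
  have at_μ := hC μ hμ
  rw [show (1 + s) * ν - s * μ - ν = s * (ν - μ) by ring, abs_mul, abs_of_nonneg hs] at at_point
  rw [abs_sub_comm] at at_μ
  nlinarith [mul_le_mul_of_nonneg_left at_μ hs]

end Superquadratic

section CStarAlgebra

variable {A : Type*} [CStarAlgebra A]

theorem cfc_comp_abs_sub_algebraMap {f : ℝ → ℝ} (hf : ContinuousOn f (Ici 0)) (μ : ℝ) {a : A}
    (ha : IsSelfAdjoint a) :
    cfc f (cfc (fun s : ℝ => |s|) (a - algebraMap ℝ A μ)) = cfc (fun s => f |s - μ|) a := by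
  have hsub : cfc (fun s : ℝ => s - μ) a = a - algebraMap ℝ A μ := by
    rw [cfc_sub .., cfc_id' ℝ a, cfc_const μ a]
  have hf_image : ContinuousOn f ((fun s => |s - μ|) '' spectrum ℝ a) :=
    hf.mono (by rintro _ ⟨s, -, rfl⟩; exact abs_nonneg (s - μ))
  rw [← hsub, ← cfc_comp' (fun s : ℝ => |s|) (fun s => s - μ) a,
    ← cfc_comp' f (fun s => |s - μ|) a hf_image]

theorem algebraMap_add_smul_add_cfc_le_cfc [PartialOrder A] [StarOrderedRing A] {f : ℝ → ℝ}
    (hf_cont : ContinuousOn f (Ici 0)) {μ C : ℝ}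
    (hC : ∀ b : ℝ, 0 ≤ b → f b ≥ f μ + C * (b - μ) + f |b - μ|) {a : A} (ha : 0 ≤ a) :
    algebraMap ℝ A (f μ) + C • (a - algebraMap ℝ A μ) + cfc (fun s => f |s - μ|) a ≤ cfc f a := by
  have hspec : spectrum ℝ a ⊆ Ici 0 := fun _ hs => spectrum_nonneg_of_nonneg ha hs
  have hcont : ContinuousOn (fun s => f |s - μ|) (spectrum ℝ a) :=
    hf_cont.comp_continuous (by fun_prop) (fun _ => mem_Ici.2 (abs_nonneg _)) |>.continuousOn
  calc algebraMap ℝ A (f μ) + C • (a - algebraMap ℝ A μ) + cfc (fun s => f |s - μ|) a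
      = cfc (fun s => f μ + C * (s - μ) + f |s - μ|) a := by
        rw [cfc_add .., cfc_add .., cfc_const .., cfc_const_mul .., cfc_sub .., cfc_id' ℝ a,
          cfc_const μ a]
    _ ≤ cfc f a := by
        refine cfc_mono (fun s hs => hC s (hspec hs)) ?_ (hf_cont.mono hspec)
        exact (by fun_prop : Continuous fun s => f μ + C * (s - μ)).continuousOn.add hcont

end CStarAlgebra

section HilbertSpace

variable {H : Type*} [NormedAddCommGroup H] [InnerProductSpace ℂ H]

namespace ContinuousLinearMap

theorem re_inner_apply_le_of_le {T S : H →L[ℂ] H} (h : T ≤ S) (y : H) :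
    RCLike.re ⟪T y, y⟫_ℂ ≤ RCLike.re ⟪S y, y⟫_ℂ := by
  have := ((le_def T S).1 h).re_inner_nonneg_left y
  simpa [inner_sub_left] using this

theorem re_inner_algebraMap_apply (c : ℝ) (y : H) :
    RCLike.re ⟪algebraMap ℝ (H →L[ℂ] H) c y, y⟫_ℂ = c * ‖y‖ ^ 2 := by
  simp [Algebra.algebraMap_eq_smul_one, ← Complex.ofReal_pow]

theorem re_inner_smul_apply (c : ℝ) (T : H →L[ℂ] H) (y : H) :
    RCLike.re ⟪(c • T) y, y⟫_ℂ = c * RCLike.re ⟪T y, y⟫_ℂ := by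
  simp

theorem re_inner_apply_div_norm_sq_mul (T : H →L[ℂ] H) (y : H) :
    RCLike.re ⟪T y, y⟫_ℂ / ‖y‖ ^ 2 * ‖y‖ ^ 2 = RCLike.re ⟪T y, y⟫_ℂ :=
  div_mul_cancel_of_imp fun h => by simp [norm_eq_zero.1 (pow_eq_zero_iff two_ne_zero |>.1 h)]

end ContinuousLinearMap

open ContinuousLinearMap in
theorem Superquadratic.jensen_re_inner_cfc [CompleteSpace H] {f : ℝ → ℝ}
    (hf : Superquadratic f) (hf_cont : ContinuousOn f (Ici 0)) {B : H →L[ℂ] H} (hB : 0 ≤ B)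
    (y : H) :
    ‖y‖ ^ 2 * f (RCLike.re ⟪B y, y⟫_ℂ / ‖y‖ ^ 2)
        + RCLike.re ⟪cfc (fun s => f |s - RCLike.re ⟪B y, y⟫_ℂ / ‖y‖ ^ 2|) B y, y⟫_ℂ
      ≤ RCLike.re ⟪cfc f B y, y⟫_ℂ := by
  set μ := RCLike.re ⟪B y, y⟫_ℂ / ‖y‖ ^ 2
  have hμ : 0 ≤ μ :=
    div_nonneg (((nonneg_iff_isPositive B).1 hB).re_inner_nonneg_left y) (sq_nonneg ‖y‖)
  obtain ⟨C, hC⟩ := hf μ hμ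
  have hmean : RCLike.re ⟪(B - algebraMap ℝ (H →L[ℂ] H) μ) y, y⟫_ℂ = 0 := by
    rw [sub_apply, inner_sub_left, map_sub, re_inner_algebraMap_apply,
      re_inner_apply_div_norm_sq_mul, sub_self]
  calc ‖y‖ ^ 2 * f μ + RCLike.re ⟪cfc (fun s => f |s - μ|) B y, y⟫_ℂ
      = RCLike.re ⟪(algebraMap ℝ (H →L[ℂ] H) (f μ) + C • (B - algebraMap ℝ (H →L[ℂ] H) μ)
          + cfc (fun s => f |s - μ|) B) y, y⟫_ℂ := by
        rw [add_apply, add_apply, inner_add_left, inner_add_left, map_add, map_add,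
          re_inner_algebraMap_apply, re_inner_smul_apply, hmean, mul_zero, add_zero, mul_comm]
    _ ≤ RCLike.re ⟪cfc f B y, y⟫_ℂ :=
      re_inner_apply_le_of_le (algebraMap_add_smul_add_cfc_le_cfc hf_cont hC hB) y

end HilbertSpace

theorem external_jensen_operator_general {H : Type*} [NormedAddCommGroup H]
    [InnerProductSpace ℂ H] [CompleteSpace H]
    (f : ℝ → ℝ) (hf_cont : ContinuousOn f (Set.Ici (0:ℝ)))
    (hf : ∀ a : ℝ, 0 ≤ a → ∃ C : ℝ, ∀ b : ℝ, 0 ≤ b →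
      f b ≥ f a + C * (b - a) + f |b - a|)
    (A B : H →L[ℂ] H) (hB : 0 ≤ B)
    (x y : H) (hxy : ‖x‖^2 - ‖y‖^2 = 1)
    (hpos : 0 ≤ RCLike.re ⟪A x, x⟫_ℂ - RCLike.re ⟪B y, y⟫_ℂ) :
    f (RCLike.re ⟪A x, x⟫_ℂ - RCLike.re ⟪B y, y⟫_ℂ)
      ≥ ‖x‖^2 * f (RCLike.re ⟪A x, x⟫_ℂ / ‖x‖^2)
        - RCLike.re ⟪(cfc f B) y, y⟫_ℂ
        + RCLike.re ⟪(cfc f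
            (cfc (fun s : ℝ => |s|)
              (B - (((1/‖y‖^2) * RCLike.re ⟪B y, y⟫_ℂ : ℝ) : ℂ) • (1 : H →L[ℂ] H)))) y, y⟫_ℂ
        + f (‖y‖^2 * |RCLike.re ⟪A x, x⟫_ℂ / ‖x‖^2 - RCLike.re ⟪B y, y⟫_ℂ / ‖y‖^2|)
        + ‖y‖^2 * f (|RCLike.re ⟪A x, x⟫_ℂ / ‖x‖^2 - RCLike.re ⟪B y, y⟫_ℂ / ‖y‖^2|) := by
  have hop := Superquadratic.jensen_re_inner_cfc hf hf_cont hB y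
  set α := RCLike.re ⟪A x, x⟫_ℂ
  set β := RCLike.re ⟪B y, y⟫_ℂ
  have hx : ‖x‖ ^ 2 = 1 + ‖y‖ ^ 2 := by linarith
  have hβ : 0 ≤ β := ((ContinuousLinearMap.nonneg_iff_isPositive B).1 hB).re_inner_nonneg_left y
  have hβμ : ‖y‖ ^ 2 * (β / ‖y‖ ^ 2) = β := by
    rw [mul_comm]; exact ContinuousLinearMap.re_inner_apply_div_norm_sq_mul B y
  have hαν : (1 + ‖y‖ ^ 2) * (α / (1 + ‖y‖ ^ 2)) = α := mul_div_cancel₀ α (by positivity)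
  have hscalar := Superquadratic.external_jensen hf (sq_nonneg ‖y‖)
    (div_nonneg hβ (sq_nonneg ‖y‖)) (ν := α / (1 + ‖y‖ ^ 2))
    (div_nonneg (by linarith) (by positivity))
    (by rw [hαν, hβμ]; exact hpos)
  have hshift : (((1 / ‖y‖ ^ 2) * β : ℝ) : ℂ) • (1 : H →L[ℂ] H)
      = algebraMap ℝ (H →L[ℂ] H) (β / ‖y‖ ^ 2) := by
    rw [Algebra.algebraMap_eq_smul_one, Complex.coe_smul, one_div_mul_eq_div]
  rw [hαν, hβμ] at hscalar
  rw [hshift, cfc_comp_abs_sub_algebraMap hf_cont _ hB.isSelfAdjoint, hx]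
  linarith

theorem external_jensen_operator {H : Type*} [NormedAddCommGroup H]
    [InnerProductSpace ℂ H] [CompleteSpace H]
    (f : ℝ → ℝ) (hf_cont : ContinuousOn f (Set.Ici (0:ℝ)))
    (hf : ∀ a : ℝ, 0 ≤ a → ∃ C : ℝ, ∀ b : ℝ, 0 ≤ b →
      f b ≥ f a + C * (b - a) + f |b - a|)
    (A B : H →L[ℂ] H) (hA : 0 ≤ A) (hB : 0 ≤ B)
    (x y : H) (hy : y ≠ 0) (hxy : ‖x‖^2 - ‖y‖^2 = 1)
    (hpos : 0 ≤ RCLike.re ⟪A x, x⟫_ℂ - RCLike.re ⟪B y, y⟫_ℂ) :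
    f (RCLike.re ⟪A x, x⟫_ℂ - RCLike.re ⟪B y, y⟫_ℂ)
      ≥ ‖x‖^2 * f (RCLike.re ⟪A x, x⟫_ℂ / ‖x‖^2)
        - RCLike.re ⟪(cfc f B) y, y⟫_ℂ
        + RCLike.re ⟪(cfc f
            (cfc (fun s : ℝ => |s|)
              (B - (((1/‖y‖^2) * RCLike.re ⟪B y, y⟫_ℂ : ℝ) : ℂ) • (1 : H →L[ℂ] H)))) y, y⟫_ℂ
        + f (‖y‖^2 * |RCLike.re ⟪A x, x⟫_ℂ / ‖x‖^2 - RCLike.re ⟪B y, y⟫_ℂ / ‖y‖^2|)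
        + ‖y‖^2 * f (|RCLike.re ⟪A x, x⟫_ℂ / ‖x‖^2 - RCLike.re ⟪B y, y⟫_ℂ / ‖y‖^2|) :=
  external_jensen_operator_general f hf_cont hf A B hB x y hxy hpos
end
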